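/- arXiv:1404.1304 — 9 statements merged into one kernel-verified Lean document; each statement's English description precedes it below -/
import Mathlib

section
/- A bounded linear operator T on a complex Hilbert space H is a complex symmetric operator if and only if there exists an orthonormal basis (e_n) of H with respect to which T has a self-transpose matrix representation, i.e., ⟨T e_j, e_i⟩ = ⟨T e_i, e_j⟩ for all indices i, j. -/
open scoped ComplexInnerProductSpace

noncomputable section

/-- A conjugation on a complex inner product space: conjugate-linear, involutive, isometric. -/
def IsConjugation {H : Type*} [NormedAddCommGroup H] [InnerProductSpace ℂ H] (C : H → H) : Prop :=
  (∀ x y : H, C (x + y) = C x + C y) ∧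
  (∀ (a : ℂ) (x : H), C (a • x) = (starRingEnd ℂ) a • C x) ∧
  (∀ x : H, C (C x) = x) ∧
  (∀ x : H, ‖C x‖ = ‖x‖)

universe u

section Aux

variable {H : Type u} [NormedAddCommGroup H] [InnerProductSpace ℂ H]

lemma IsConjugation.inner_map_map {C : H → H} (hC : IsConjugation C) (x y : H) :
    ⟪C x, C y⟫ = ⟪y, x⟫ := by
  letI : InnerProductSpace ℝ H := InnerProductSpace.rclikeToReal ℂ H
  obtain ⟨hadd, hsmul, hinv, hnorm⟩ := hC
  have hreal : ∀ (r : ℝ) (z : H), C (r • z) = r • C z := by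
    intro r z
    rw [← Complex.coe_smul, hsmul, Complex.conj_ofReal, Complex.coe_smul]
  let L : H →ₗᵢ[ℝ] H :=
    ⟨{ toFun := C, map_add' := hadd, map_smul' := hreal }, hnorm⟩
  have hre : ∀ x y : H, (⟪C x, C y⟫).re = (⟪x, y⟫).re := by
    intro x y
    have h1 := L.inner_map_map x y
    have h2 : ∀ a b : H, (inner ℝ a b : ℝ) = (⟪a, b⟫).re := fun a b => rfl
    rw [h2, h2] at h1
    exact h1
  have him : (⟪C x, C y⟫).im = -(⟪x, y⟫).im := by
    have h2 := hre x (Complex.I • y)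
    have hCI : C (Complex.I • y) = (-Complex.I) • C y := by
      rw [hsmul]; simp
    rw [hCI, inner_smul_right, inner_smul_right] at h2
    simpa using h2
  apply Complex.ext
  · rw [← inner_conj_symm y x, Complex.conj_re]; exact hre x y
  · rw [← inner_conj_symm y x, Complex.conj_im]; exact him

lemma IsConjugation.inner_swap {C : H → H} (hC : IsConjugation C) (x y : H) :
    ⟪x, C y⟫ = ⟪y, C x⟫ := by
  have h := hC.inner_map_map (C x) y
  rwa [hC.2.2.1 x] at h

end Aux

theorem stmt1 {H : Type u} [NormedAddCommGroup H] [InnerProductSpace ℂ H] [CompleteSpace H]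
    (T : H →L[ℂ] H) :
    (∃ C : H → H, IsConjugation C ∧ ∀ x, T x = C (ContinuousLinearMap.adjoint T (C x))) ↔
      ∃ (ι : Type u) (e : HilbertBasis ι ℂ H),
        ∀ i j, ⟪e i, T (e j)⟫ = ⟪e j, T (e i)⟫ := by
  constructor
  · rintro ⟨C, hC, hT⟩
    obtain ⟨hadd, hsmul, hinv, hnorm⟩ := hC
    letI : InnerProductSpace ℝ H := InnerProductSpace.rclikeToReal ℂ H
    have hreal : ∀ (r : ℝ) (z : H), C (r • z) = r • C z := by
      intro r z
      rw [← Complex.coe_smul, hsmul, Complex.conj_ofReal, Complex.coe_smul]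
    -- C is continuous
    have hCiso : Isometry C := by
      apply Isometry.of_dist_eq
      intro a b
      have hsub : C (a - b) = C a - C b := by
        rw [sub_eq_add_neg, hadd, sub_eq_add_neg, ← neg_one_smul ℂ b, hsmul]
        simp
      rw [dist_eq_norm, dist_eq_norm, ← hsub, hnorm]
    -- the real subspace of C-fixed vectors
    let K : Submodule ℝ H :=
      { carrier := {z | C z = z}
        add_mem' := fun {a b} ha hb => by
          simp only [Set.mem_setOf_eq] at *
          rw [hadd, ha, hb]
        zero_mem' := by
          have h0 := hsmul 0 0
          simpa using h0
        smul_mem' := fun r z hz => by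
          simp only [Set.mem_setOf_eq] at *
          rw [hreal, hz] }
    have hKclosed : IsClosed (K : Set H) :=
      isClosed_eq hCiso.continuous continuous_id
    haveI : CompleteSpace K := hKclosed.completeSpace_coe
    obtain ⟨w, b, -⟩ := exists_hilbertBasis ℝ K
    let v : w → H := fun i => ((b i : K) : H)
    have hvK : ∀ i, C (v i) = v i := fun i => (b i).2
    -- complex inner products of C-fixed vectors are real
    have hKr : ∀ z1 z2 : K, ⟪(z1 : H), (z2 : H)⟫ = ((⟪(z1 : H), (z2 : H)⟫).re : ℂ) := by
      intro z1 z2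
      have h := IsConjugation.inner_map_map ⟨hadd, hsmul, hinv, hnorm⟩ (z1 : H) (z2 : H)
      rw [z1.2, z2.2] at h
      have hconj : (starRingEnd ℂ) ⟪(z1 : H), (z2 : H)⟫ = ⟪(z1 : H), (z2 : H)⟫ := by
        rw [inner_conj_symm, h]
      exact (Complex.conj_eq_iff_re.mp hconj).symm
    classical
    have hon : Orthonormal ℂ v := by
      rw [orthonormal_iff_ite]
      intro i j
      have hbij := (orthonormal_iff_ite.mp b.orthonormal) i j
      have hre : (inner ℝ (b i) (b j) : ℝ) = (⟪v i, v j⟫).re := rfl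
      rw [hKr (b i) (b j)]
      rw [← hre, hbij]
      split <;> simp
    -- density of the complex span
    have hdense : ⊤ ≤ (Submodule.span ℂ (Set.range v)).topologicalClosure := by
      intro x _
      set S := Submodule.span ℂ (Set.range v) with hS
      have hmemK : ∀ z : K, (z : H) ∈ S.topologicalClosure := by
        intro z
        have hz : z ∈ (Submodule.span ℝ (Set.range ⇑b)).topologicalClosure := by
          rw [b.dense_span]; trivial
        have hz' : (z : H) ∈
            closure (Subtype.val '' ((Submodule.span ℝ (Set.range ⇑b) : Submodule ℝ K) : Set K)) := by
          apply image_closure_subset_closure_image continuous_subtype_val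
          exact Set.mem_image_of_mem _ hz
        have hsub : Subtype.val '' ((Submodule.span ℝ (Set.range ⇑b) : Submodule ℝ K) : Set K)
            ⊆ (S : Set H) := by
          rintro _ ⟨y, hy, rfl⟩
          induction hy using Submodule.span_induction with
          | mem u hu =>
            obtain ⟨i, rfl⟩ := hu
            exact Submodule.subset_span ⟨i, rfl⟩
          | zero => simp [Submodule.zero_mem]
          | add u t _ _ hu ht => simpa using Submodule.add_mem S hu ht
          | smul r u _ hu =>
            have : ((r • u : K) : H) = (r : ℂ) • (u : H) := by
              rw [Complex.coe_smul]; rfl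
            rw [this]
            exact Submodule.smul_mem S _ hu
        exact closure_mono hsub hz'
      -- decompose x into C-fixed parts
      set a : H := ((2 : ℂ)⁻¹) • (x + C x) with ha_def
      set bb : H := (-(Complex.I / 2)) • (x - C x) with hb_def
      have hCa : C a = a := by
        rw [ha_def, hsmul, hadd, hinv]
        simp only [map_inv₀, Complex.conj_ofNat]
        rw [add_comm]
      have hCb : C bb = bb := by
        have hsub : C (x - C x) = C x - x := by
          rw [sub_eq_add_neg, hadd, ← neg_one_smul ℂ (C x), hsmul, hinv]
          simp [sub_eq_add_neg]
        rw [hb_def, hsmul, hsub]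
        have hc : (starRingEnd ℂ) (-(Complex.I / 2)) = Complex.I / 2 := by
          rw [map_neg, map_div₀, Complex.conj_I, map_ofNat]
          ring
        rw [hc]
        module
      have hx : x = a + Complex.I • bb := by
        rw [ha_def, hb_def, smul_smul]
        have : Complex.I * -(Complex.I / 2) = (2 : ℂ)⁻¹ := by
          rw [mul_neg, mul_div_assoc', Complex.I_mul_I]
          norm_num
        rw [this]
        module
      have haK : a ∈ K := hCa
      have hbK : bb ∈ K := hCb
      rw [hx]
      exact Submodule.add_mem _ (hmemK ⟨a, haK⟩)
        (Submodule.smul_mem _ _ (hmemK ⟨bb, hbK⟩))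
    refine ⟨w, HilbertBasis.mk hon hdense, ?_⟩
    have he : ⇑(HilbertBasis.mk hon hdense) = v := HilbertBasis.coe_mk hon hdense
    intro i j
    rw [he]
    have hswap := IsConjugation.inner_swap ⟨hadd, hsmul, hinv, hnorm⟩
    calc ⟪v i, T (v j)⟫ = ⟪v i, C (ContinuousLinearMap.adjoint T (C (v j)))⟫ := by
          rw [← hT (v j)]
      _ = ⟪v i, C (ContinuousLinearMap.adjoint T (v j))⟫ := by rw [hvK j]
      _ = ⟪ContinuousLinearMap.adjoint T (v j), C (v i)⟫ := hswap _ _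
      _ = ⟪ContinuousLinearMap.adjoint T (v j), v i⟫ := by rw [hvK i]
      _ = ⟪v j, T (v i)⟫ := ContinuousLinearMap.adjoint_inner_left T (v i) (v j)
  · rintro ⟨ι, e, hsym⟩
    set C : H → H := fun x => e.repr.symm (star (e.repr x)) with hC_def
    have hrepr : ∀ x : H, e.repr (C x) = star (e.repr x) := fun x =>
      e.repr.apply_symm_apply _
    have hCinner : ∀ (x : H) (i : ι), ⟪e i, C x⟫ = star ⟪e i, x⟫ := by
      intro x i
      rw [← e.repr_apply_apply, hrepr, lp.star_apply, e.repr_apply_apply]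
    refine ⟨C, ⟨?_, ?_, ?_, ?_⟩, ?_⟩
    · intro x y
      simp [hC_def, map_add, star_add]
    · intro a x
      simp only [hC_def, map_smul, star_smul, RCLike.star_def]
    · intro x
      simp [hC_def, e.repr.apply_symm_apply, star_star, e.repr.symm_apply_apply]
    · intro x
      simp [hC_def, norm_star]
    · intro x
      apply e.repr.injective
      apply lp.ext
      funext i
      rw [hrepr, lp.star_apply, e.repr_apply_apply, e.repr_apply_apply]
      rw [ContinuousLinearMap.adjoint_inner_right]
      rw [← ContinuousLinearMap.adjoint_inner_left T x (e i)]
      rw [← e.tsum_inner_mul_inner (T (e i)) (C x)]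
      rw [← e.tsum_inner_mul_inner ((ContinuousLinearMap.adjoint T) (e i)) x]
      rw [tsum_star]
      apply tsum_congr
      intro j
      rw [star_mul', hCinner x j, star_star]
      congr 1
      rw [ContinuousLinearMap.adjoint_inner_left, hsym i j]
      exact (inner_conj_symm (e j) (T (e i))).symm
end
end

section
/- For every natural number n and every matrix A ∈ M_n(ℂ), there exist an invertible matrix S ∈ GL_n(ℂ) and a complex symmetric matrix B ∈ M_n(ℂ) (i.e., Bᵀ = B) such that A = S B S⁻¹. That is, every finite square complex matrix is similar to a complex symmetric matrix. -/
open Matrix Polynomial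

namespace StmtAux

variable {m : Type*} [Fintype m] [DecidableEq m]

/-- `A` is similar to a complex symmetric matrix. -/
def Symmable (A : Matrix m m ℂ) : Prop :=
  ∃ S B : Matrix m m ℂ, IsUnit S ∧ Bᵀ = B ∧ A * S = S * B

lemma Symmable.of_sim {A P A' : Matrix m m ℂ}
    (hP : IsUnit P) (h : A * P = P * A') (h' : Symmable A') : Symmable A := by
  obtain ⟨S, B, hS, hB, hAB⟩ := h'
  exact ⟨P * S, B, hP.mul hS, hB, by
    rw [← Matrix.mul_assoc, h, Matrix.mul_assoc, hAB, Matrix.mul_assoc]⟩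

/-- the flip (exchange) matrix -/
def Fl (e : ℕ) : Matrix (Fin e) (Fin e) ℂ :=
  Matrix.of fun i j => if (i : ℕ) + (j : ℕ) = e - 1 then 1 else 0

lemma flip_cond {e : ℕ} (i k : Fin e) : ((i : ℕ) + (k : ℕ) = e - 1) ↔ k = Fin.rev i := by
  rw [Fin.ext_iff, Fin.val_rev]
  have := i.isLt; have := k.isLt
  omega

lemma Fl_transpose (e : ℕ) : (Fl e)ᵀ = Fl e := by
  ext i j
  simp only [transpose_apply, Fl, Matrix.of_apply]
  rw [add_comm]

lemma Fl_mul {e : ℕ} (M : Matrix (Fin e) (Fin e) ℂ) (i j : Fin e) :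
    (Fl e * M) i j = M (Fin.rev i) j := by
  rw [Matrix.mul_apply]
  rw [Finset.sum_eq_single (Fin.rev i)]
  · simp [Fl, flip_cond]
  · intro b _ hb
    simp only [Fl, Matrix.of_apply, flip_cond, if_neg hb, zero_mul]
  · simp

lemma mul_Fl {e : ℕ} (M : Matrix (Fin e) (Fin e) ℂ) (i j : Fin e) :
    (M * Fl e) i j = M i (Fin.rev j) := by
  rw [Matrix.mul_apply]
  rw [Finset.sum_eq_single (Fin.rev j)]
  · have hc : ((Fin.rev j : Fin e) : ℕ) + (j : ℕ) = e - 1 := by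
      rw [Fin.val_rev]; have := j.isLt; omega
    simp only [Fl, Matrix.of_apply]
    rw [if_pos hc, mul_one]
  · intro b _ hb
    have hc : ¬ ((b : ℕ) + (j : ℕ) = e - 1) := by
      intro hc
      exact hb (by rw [Fin.ext_iff, Fin.val_rev]; have := j.isLt; have := b.isLt; omega)
    simp only [Fl, Matrix.of_apply]
    rw [if_neg hc, mul_zero]
  · simp

lemma Fl_mul_Fl (e : ℕ) : Fl e * Fl e = 1 := by
  ext i j
  rw [Fl_mul]
  simp only [Fl, Matrix.of_apply, one_apply]
  rw [Fin.val_rev]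
  have := i.isLt; have := j.isLt
  by_cases h : i = j
  · subst h; rw [if_pos rfl, if_pos (by omega)]
  · rw [if_neg h, if_neg (by rw [Fin.ext_iff] at h; omega)]

/-- Jordan block (lower triangular convention) -/
def Jb (lam : ℂ) (e : ℕ) : Matrix (Fin e) (Fin e) ℂ :=
  Matrix.of fun i j => (if i = j then lam else 0) + (if (j : ℕ) + 1 = (i : ℕ) then 1 else 0)

lemma Fl_mul_Jb (lam : ℂ) (e : ℕ) : Fl e * Jb lam e = (Jb lam e)ᵀ * Fl e := by
  ext i j
  rw [Fl_mul, mul_Fl, transpose_apply]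
  simp only [Jb, Matrix.of_apply]
  rw [Fin.val_rev, Fin.val_rev]
  have := i.isLt; have := j.isLt
  have c1 : (Fin.rev i = j) ↔ (Fin.rev j = i) := by
    rw [Fin.ext_iff, Fin.ext_iff, Fin.val_rev, Fin.val_rev]; omega
  have c2 : ((j:ℕ) + 1 = e - ((i:ℕ) + 1)) ↔ ((i:ℕ) + 1 = e - ((j:ℕ) + 1)) := by
    omega
  rw [if_congr c1 rfl rfl, if_congr c2 rfl rfl]

lemma sq_helper {A : Type*} [Ring A] [Algebra ℂ A] (a b : ℂ) (F : A) (hF : F * F = 1) :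
    (a • (1:A) + b • F) * (a • (1:A) + b • F) = (a*a + b*b) • (1:A) + (2*(a*b)) • F := by
  simp only [mul_add, add_mul, smul_mul_assoc, mul_smul_comm, one_mul, mul_one, hF,
    smul_add, smul_smul, add_smul, two_mul, mul_comm b a]
  abel

noncomputable def Sm (e : ℕ) : Matrix (Fin e) (Fin e) ℂ :=
  ((1 - Complex.I)/2) • 1 + ((1 + Complex.I)/2) • Fl e

lemma coef1 : ((1 - Complex.I)/2) * ((1 - Complex.I)/2)
    + ((1 + Complex.I)/2) * ((1 + Complex.I)/2) = 0 := by
  have hI := Complex.I_sq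
  field_simp
  ring_nf
  rw [hI]
  ring

lemma coef2 : (2 : ℂ) * (((1 - Complex.I)/2) * ((1 + Complex.I)/2)) = 1 := by
  have hI := Complex.I_sq
  field_simp
  ring_nf
  rw [hI]
  ring

lemma Sm_transpose (e : ℕ) : (Sm e)ᵀ = Sm e := by
  simp [Sm, transpose_smul, Fl_transpose]

lemma Sm_mul_Sm (e : ℕ) : Sm e * Sm e = Fl e := by
  rw [Sm, sq_helper _ _ _ (Fl_mul_Fl e), coef1, coef2, zero_smul, one_smul, zero_add]

lemma Sm_comm_Fl (e : ℕ) : Sm e * Fl e = Fl e * Sm e := by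
  simp only [Sm, Matrix.add_mul, Matrix.mul_add, Matrix.smul_mul, Matrix.mul_smul,
    Matrix.one_mul, Matrix.mul_one]

lemma isUnit_Sm (e : ℕ) : IsUnit (Sm e) := by
  rw [Matrix.isUnit_iff_isUnit_det]
  exact Matrix.isUnit_det_of_right_inverse
    (B := Sm e * Fl e) (by rw [← Matrix.mul_assoc, Sm_mul_Sm, Fl_mul_Fl])

lemma symmable_Jb (lam : ℂ) (e : ℕ) : Symmable (Jb lam e) := by
  refine ⟨Sm e, Sm e * Fl e * Jb lam e * Sm e, isUnit_Sm e, ?_, ?_⟩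
  · have h := Fl_mul_Jb lam e
    calc (Sm e * Fl e * Jb lam e * Sm e)ᵀ
        = (Sm e)ᵀ * ((Jb lam e)ᵀ * ((Fl e)ᵀ * (Sm e)ᵀ)) := by
          simp only [Matrix.transpose_mul, Matrix.mul_assoc]
      _ = Sm e * ((Jb lam e)ᵀ * (Fl e * Sm e)) := by
          rw [Sm_transpose, Fl_transpose]
      _ = Sm e * Fl e * Jb lam e * Sm e := by
          rw [← Matrix.mul_assoc _ (Fl e) (Sm e), ← h]
          simp only [Matrix.mul_assoc]
  · have h2 : Sm e * (Sm e * Fl e * Jb lam e * Sm e)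
        = Sm e * Sm e * Fl e * (Jb lam e * Sm e) := by simp only [Matrix.mul_assoc]
    rw [h2, Sm_mul_Sm, Fl_mul_Fl, Matrix.one_mul]

lemma isUnit_blockDiagonal' {ι : Type*} [Fintype ι] [DecidableEq ι] {e : ι → ℕ}
    {S : ∀ i, Matrix (Fin (e i)) (Fin (e i)) ℂ} (hS : ∀ i, IsUnit (S i)) :
    IsUnit (blockDiagonal' S) := by
  rw [Matrix.isUnit_iff_isUnit_det]
  refine Matrix.isUnit_det_of_right_inverse (B := blockDiagonal' fun i => (S i)⁻¹) ?_
  rw [← Matrix.blockDiagonal'_mul, ← Matrix.blockDiagonal'_one]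
  have : (fun i => S i * (S i)⁻¹) = fun _ => (1 : Matrix _ _ ℂ) :=
    funext fun i => Matrix.mul_nonsing_inv _ ((Matrix.isUnit_iff_isUnit_det _).mp (hS i))
  rw [this]
  rfl

lemma symmable_blockDiagonal' {ι : Type*} [Fintype ι] [DecidableEq ι] {e : ι → ℕ}
    (A : ∀ i, Matrix (Fin (e i)) (Fin (e i)) ℂ) (h : ∀ i, Symmable (A i)) :
    Symmable (blockDiagonal' A) := by
  choose S B hS hB hAB using h
  refine ⟨blockDiagonal' S, blockDiagonal' B, isUnit_blockDiagonal' hS, ?_, ?_⟩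
  · rw [Matrix.blockDiagonal'_transpose, funext hB]
  · rw [← Matrix.blockDiagonal'_mul, ← Matrix.blockDiagonal'_mul, funext hAB]

lemma symmable_submatrix {n : Type*} [Fintype n] [DecidableEq n] {A : Matrix m m ℂ}
    (h : Symmable A) (f : n ≃ m) : Symmable (A.submatrix f f) := by
  obtain ⟨S, B, hS, hB, hAB⟩ := h
  refine ⟨S.submatrix f f, B.submatrix f f, ?_, ?_, ?_⟩
  · have : S.submatrix f f = (Matrix.reindexAlgEquiv ℂ ℂ f.symm) S := by
      simp [Matrix.reindexAlgEquiv_apply, Matrix.reindex_apply]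
    rw [this]
    exact hS.map _
  · rw [Matrix.transpose_submatrix, hB]
  · rw [Matrix.submatrix_mul_equiv, Matrix.submatrix_mul_equiv, hAB]




variable (lam : ℂ) (e : ℕ)

noncomputable abbrev Idl : Submodule ℂ[X] ℂ[X] := ℂ[X] ∙ ((X - C lam) ^ e)

abbrev Quot' := ℂ[X] ⧸ Idl lam e

noncomputable def qv (k : Fin e) : Quot' lam e :=
  Submodule.Quotient.mk ((X - C lam) ^ (k : ℕ))

lemma mk_sum_smul {α : Type*} (I : Submodule ℂ[X] ℂ[X]) (s : Finset α) (c : α → ℂ)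
    (w : α → ℂ[X]) :
    (Submodule.Quotient.mk (∑ i ∈ s, c i • w i) : ℂ[X] ⧸ I)
      = ∑ i ∈ s, c i • (Submodule.Quotient.mk (w i) : ℂ[X] ⧸ I) := by
  classical
  induction s using Finset.cons_induction with
  | empty => simp
  | cons a s ha ih =>
      rw [Finset.sum_cons, Finset.sum_cons, Submodule.Quotient.mk_add,
        Submodule.Quotient.mk_smul, ih]

lemma aeval_pow_sub (c : ℂ) (k : ℕ) :
    aeval (X + C c) ((X - C c) ^ k) = (X : ℂ[X]) ^ k := by
  rw [map_pow, map_sub, aeval_X, aeval_C]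
  congr 1
  simp

lemma qv_li : LinearIndependent ℂ (qv lam e) := by
  rw [Fintype.linearIndependent_iff]
  intro g hg k
  have h1 : (∑ k : Fin e, g k • qv lam e k)
      = Submodule.Quotient.mk (p := Idl lam e) (∑ k : Fin e, g k • (X - C lam) ^ (k : ℕ)) := by
    rw [mk_sum_smul]
    rfl
  rw [h1] at hg
  have h2 : (∑ k : Fin e, g k • (X - C lam) ^ (k : ℕ)) ∈ Idl lam e :=
    (Submodule.Quotient.mk_eq_zero _).mp hg
  obtain ⟨a, ha⟩ := Submodule.mem_span_singleton.mp h2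
  have h3 : aeval (X + C lam) (∑ k : Fin e, g k • (X - C lam) ^ (k : ℕ))
      = ∑ k : Fin e, g k • (X : ℂ[X]) ^ (k : ℕ) := by
    rw [map_sum]
    refine Finset.sum_congr rfl fun k _ => ?_
    rw [_root_.map_smul, aeval_pow_sub]
  have hdvd : (X : ℂ[X]) ^ e ∣ ∑ k : Fin e, g k • (X : ℂ[X]) ^ (k : ℕ) := by
    refine ⟨aeval (X + C lam) a, ?_⟩
    rw [← h3, ← ha, smul_eq_mul, _root_.map_mul, aeval_pow_sub, mul_comm]
  have hq0 : (∑ k : Fin e, g k • (X : ℂ[X]) ^ (k : ℕ)) = 0 := by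
    by_contra hne
    have hle : e ≤ (∑ k : Fin e, g k • (X : ℂ[X]) ^ (k : ℕ)).natDegree :=
      le_trans (by simp) (Polynomial.natDegree_le_of_dvd hdvd hne)
    have hlt : (∑ k : Fin e, g k • (X : ℂ[X]) ^ (k : ℕ)).natDegree ≤ e - 1 := by
      refine le_trans (Polynomial.natDegree_sum_le _ _) ?_
      rw [Finset.fold_max_le]
      refine ⟨by have := k.isLt; omega, fun j _ => ?_⟩
      refine le_trans (Polynomial.natDegree_smul_le _ _) ?_
      rw [Polynomial.natDegree_X_pow]
      have := j.isLt; omega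
    have := k.isLt; omega
  have hco := congrArg (fun p => Polynomial.coeff p (k : ℕ)) hq0
  simp only [Polynomial.finset_sum_coeff, Polynomial.coeff_smul, Polynomial.coeff_X_pow,
    Polynomial.coeff_zero, smul_eq_mul] at hco
  rwa [Finset.sum_eq_single k
    (fun j _ hj => by rw [if_neg (fun hc => hj (Fin.ext hc.symm)), mul_zero])
    (by simp), if_pos rfl, mul_one] at hco

lemma qv_span : ⊤ ≤ Submodule.span ℂ (Set.range (qv lam e)) := by
  rintro x -
  obtain ⟨p, rfl⟩ := Submodule.Quotient.mk_surjective _ x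
  have hmonic : ((X - C lam) ^ e).Monic := (monic_X_sub_C lam).pow e
  have hmk : (Submodule.Quotient.mk p : Quot' lam e)
      = Submodule.Quotient.mk (p %ₘ ((X - C lam) ^ e)) := by
    rw [Submodule.Quotient.eq]
    refine Submodule.mem_span_singleton.mpr ⟨p /ₘ ((X - C lam) ^ e), ?_⟩
    have := Polynomial.modByMonic_add_div p ((X - C lam) ^ e)
    rw [smul_eq_mul]
    linear_combination (norm := ring_nf) this
  rw [hmk]
  set r := p %ₘ ((X - C lam) ^ e) with hr
  by_cases he : e = 0
  · subst he
    have : r ∈ Idl lam 0 := Submodule.mem_span_singleton.mpr ⟨r, by simp⟩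
    rw [(Submodule.Quotient.mk_eq_zero _).mpr this]
    exact Submodule.zero_mem _
  have hdeg : r.natDegree < e := by
    rcases eq_or_ne r 0 with h0 | h0
    · rw [h0]; simpa using Nat.pos_of_ne_zero he
    · have := Polynomial.natDegree_modByMonic_lt p hmonic (by
        intro h
        simpa [Polynomial.natDegree_pow, he] using congrArg Polynomial.natDegree h)
      simpa [Polynomial.natDegree_pow] using this
  set s : ℂ[X] := aeval (X + C lam) r with hs
  have hsr : aeval (X - C lam) s = r := by
    rw [hs, ← comp_eq_aeval, ← comp_eq_aeval, Polynomial.comp_assoc]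
    simp [Polynomial.add_comp]
  have hsdeg : s.natDegree < e := by
    rw [hs, ← comp_eq_aeval]
    refine lt_of_le_of_lt ?_ hdeg
    rw [Polynomial.natDegree_comp]
    simp
  have hsum : s = ∑ i ∈ Finset.range e, s.coeff i • (X : ℂ[X]) ^ i := by
    have := Polynomial.as_sum_range' s e hsdeg
    simpa [Polynomial.smul_X_eq_monomial] using this
  have hrsum : r = ∑ i ∈ Finset.range e, s.coeff i • (X - C lam) ^ i := by
    conv_lhs => rw [← hsr, hsum]
    rw [map_sum]
    refine Finset.sum_congr rfl fun i _ => ?_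
    rw [_root_.map_smul, map_pow, aeval_X]
  rw [hrsum, mk_sum_smul]
  refine Submodule.sum_mem _ fun i hi => Submodule.smul_mem _ _ ?_
  exact Submodule.subset_span ⟨⟨i, Finset.mem_range.mp hi⟩, rfl⟩

noncomputable def qb : Module.Basis (Fin e) ℂ (Quot' lam e) :=
  Module.Basis.mk (qv_li lam e) (qv_span lam e)

lemma X_smul_qv (k : Fin e) :
    (X : ℂ[X]) • qv lam e k
      = lam • qv lam e k
        + (if h : (k : ℕ) + 1 < e then qv lam e ⟨(k : ℕ) + 1, h⟩ else 0) := by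
  have h1 : (X : ℂ[X]) • qv lam e k
      = Submodule.Quotient.mk (X * (X - C lam) ^ (k : ℕ)) := by
    rw [qv, ← Submodule.Quotient.mk_smul]; rfl
  have h2 : X * (X - C lam) ^ (k : ℕ)
      = (X - C lam) ^ ((k : ℕ) + 1) + lam • (X - C lam) ^ (k : ℕ) := by
    rw [pow_succ, Polynomial.smul_eq_C_mul]
    ring
  rw [h1, h2, Submodule.Quotient.mk_add,
    show (Submodule.Quotient.mk (lam • (X - C lam) ^ (k:ℕ)) : Quot' lam e)
      = lam • qv lam e k from Submodule.Quotient.mk_smul _ _ _, add_comm]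
  congr 1
  by_cases h : (k : ℕ) + 1 < e
  · rw [dif_pos h]; rfl
  · rw [dif_neg h]
    have hke : (k : ℕ) + 1 = e := by have := k.isLt; omega
    refine (Submodule.Quotient.mk_eq_zero _).mpr ?_
    rw [hke]
    exact Submodule.mem_span_singleton_self _

lemma repr_X_smul (k j : Fin e) :
    (qb lam e).repr ((X : ℂ[X]) • qb lam e k) j = Jb lam e j k := by
  have hq : ∀ i : Fin e, qv lam e i = qb lam e i := fun i => (Module.Basis.mk_apply _ _ _).symm
  rw [← hq k, X_smul_qv]
  rw [map_add, _root_.map_smul]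
  have hfirst : (lam • (qb lam e).repr (qv lam e k)) j = if j = k then lam else 0 := by
    rw [hq, Module.Basis.repr_self, Finsupp.smul_apply, Finsupp.single_apply, smul_eq_mul]
    by_cases hjk : j = k
    · rw [if_pos hjk.symm, if_pos hjk, mul_one]
    · rw [if_neg (fun h' => hjk h'.symm), if_neg hjk, mul_zero]
  have hsecond : ((qb lam e).repr
        (if h : (k : ℕ) + 1 < e then qv lam e ⟨(k : ℕ) + 1, h⟩ else 0)) j
      = if (k : ℕ) + 1 = (j : ℕ) then 1 else 0 := by
    by_cases h : (k : ℕ) + 1 < e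
    · rw [dif_pos h, hq, Module.Basis.repr_self, Finsupp.single_apply]
      by_cases hjk : (⟨(k:ℕ)+1, h⟩ : Fin e) = j
      · rw [if_pos hjk, if_pos (by rw [← hjk])]
      · rw [if_neg hjk, if_neg (fun hc => hjk (Fin.ext hc))]
    · rw [dif_neg h, map_zero,
        if_neg (fun hc => h (by rw [hc]; exact j.isLt))]
      rfl
  rw [Jb, Matrix.of_apply, ← hfirst, ← hsecond]
  rfl



section DirectSumPart

variable {ι : Type} [Fintype ι] [DecidableEq ι] (lam : ι → ℂ) (e : ι → ℕ)

abbrev Dsum := Π₀ i : ι, Quot' (lam i) (e i)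

noncomputable def bD : Module.Basis (Σ i : ι, Fin (e i)) ℂ (Dsum lam e) :=
  DFinsupp.basis fun i => qb (lam i) (e i)

lemma bD_repr (x : Dsum lam e) (i : ι) (k : Fin (e i)) :
    (bD lam e).repr x ⟨i, k⟩ = (qb (lam i) (e i)).repr (x i) k := by
  rfl

lemma bD_apply (j : ι) (l : Fin (e j)) :
    bD lam e ⟨j, l⟩ = DFinsupp.single j (qb (lam j) (e j) l) := by
  rw [← (bD lam e).repr.symm_apply_apply (DFinsupp.single j (qb (lam j) (e j) l))]
  rw [← Module.Basis.repr_symm_single_one]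
  congr 1
  ext ⟨i, k⟩
  rw [bD_repr]
  by_cases h : i = j
  · subst h
    rw [DFinsupp.single_eq_same, Module.Basis.repr_self, Finsupp.single_apply, Finsupp.single_apply]
    by_cases hkl : l = k
    · rw [if_pos hkl, if_pos (by rw [hkl])]
    · rw [if_neg hkl, if_neg (by intro hc; exact hkl (by
        have := (Sigma.mk.inj_iff.mp hc).2
        exact eq_of_heq this))]
  · rw [DFinsupp.single_eq_of_ne h, map_zero,
      Finsupp.single_apply, if_neg (by intro hc; exact h (Sigma.mk.inj_iff.mp hc).1.symm)]
    rfl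

/-- the `X`-scalar action as a `ℂ`-linear endomorphism of the direct sum -/
noncomputable def Xact : Dsum lam e →ₗ[ℂ] Dsum lam e :=
  LinearMap.restrictScalars ℂ (LinearMap.lsmul ℂ[X] (Dsum lam e) X)

lemma Xact_apply (x : Dsum lam e) : Xact lam e x = (X : ℂ[X]) • x := rfl

lemma toMatrix_Xact :
    LinearMap.toMatrix (bD lam e) (bD lam e) (Xact lam e)
      = Matrix.blockDiagonal' (fun i => Jb (lam i) (e i)) := by
  ext ⟨i, k⟩ ⟨j, l⟩
  rw [LinearMap.toMatrix_apply, bD_apply, bD_repr]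
  have hXact : ∀ x : Dsum lam e, Xact lam e x = (X : ℂ[X]) • x := fun _ => rfl
  rw [hXact]
  by_cases h : i = j
  · subst h
    have h4 : ((X : ℂ[X]) • (DFinsupp.single i (qb (lam i) (e i) l) : Dsum lam e)) i
        = (X : ℂ[X]) • qb (lam i) (e i) l := by
      rw [DFinsupp.smul_apply]
      congr 1
      exact DFinsupp.single_eq_same
    rw [h4, repr_X_smul, Matrix.blockDiagonal'_apply_eq]
  · have h4 : ((X : ℂ[X]) • (DFinsupp.single j (qb (lam j) (e j) l) : Dsum lam e)) i
        = 0 := by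
      rw [DFinsupp.smul_apply, DFinsupp.single_eq_of_ne h, smul_zero]
    rw [h4, map_zero, Matrix.blockDiagonal'_apply_ne _ _ _ h]
    rfl

end DirectSumPart

end StmtAux

open StmtAux

theorem stmt2 (n : ℕ) (A : Matrix (Fin n) (Fin n) ℂ) :
    ∃ S B : Matrix (Fin n) (Fin n) ℂ,
      IsUnit S ∧ Bᵀ = B ∧ A = S * B * S⁻¹ := by
  classical
  -- Step 1: reduce to `Symmable A`.
  suffices h : Symmable A by
    obtain ⟨S, B, hS, hB, hAB⟩ := h
    refine ⟨S, B, hS, hB, ?_⟩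
    have hdet : IsUnit S.det := (Matrix.isUnit_iff_isUnit_det S).mp hS
    calc A = A * S * S⁻¹ := by rw [Matrix.mul_nonsing_inv_cancel_right _ _ hdet]
    _ = S * B * S⁻¹ := by rw [hAB]
  -- Step 2: set up the `ℂ[X]`-module structure via `A`.
  set φ : (Fin n → ℂ) →ₗ[ℂ] (Fin n → ℂ) := Matrix.mulVecLin A with hφ
  have htor : Module.IsTorsion ℂ[X] (Module.AEval' φ) :=
    Module.AEval.isTorsion_of_finiteDimensional ℂ (Fin n → ℂ) φ
  obtain ⟨ι, hι, p, hp, e, ⟨eqv⟩⟩ :=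
    Module.equiv_directSum_of_isTorsion (R := ℂ[X]) (M := Module.AEval' φ) htor
  haveI := hι
  -- Step 3: replace each prime by a linear factor.
  have hlam : ∀ i : ι, ∃ lam : ℂ, (ℂ[X] ∙ (p i ^ e i)) = Idl lam (e i) := by
    intro i
    have hdeg : (p i).degree = 1 := IsAlgClosed.degree_eq_one_of_irreducible ℂ (hp i)
    obtain ⟨z, hz⟩ := Polynomial.exists_root_of_degree_eq_one hdeg
    obtain ⟨q, hq⟩ := (Polynomial.dvd_iff_isRoot.mpr hz : (X - C z) ∣ p i)
    have hq0 : q ≠ 0 := by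
      intro h0
      exact (hp i).ne_zero (by rw [hq, h0, mul_zero])
    have hdq : q.degree = 0 := by
      have h1 : (p i).degree = (X - C z).degree + q.degree := by
        rw [hq, Polynomial.degree_mul]
      rw [hdeg, Polynomial.degree_X_sub_C] at h1
      have h2 := Polynomial.degree_eq_natDegree hq0
      rw [h2] at h1 ⊢
      norm_cast at h1 ⊢
      omega
    have huq : IsUnit q := by
      rw [Polynomial.eq_C_of_degree_le_zero (le_of_eq hdq)]
      refine Polynomial.isUnit_C.mpr (isUnit_iff_ne_zero.mpr ?_)
      intro h0
      exact hq0 (by rw [Polynomial.eq_C_of_degree_le_zero (le_of_eq hdq), h0, map_zero])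
    have hassoc : Associated (p i) ((X : ℂ[X]) - C z) := by
      rw [hq]
      exact associated_mul_unit_left _ _ huq
    refine ⟨z, ?_⟩
    show Ideal.span {p i ^ e i} = Ideal.span {((X : ℂ[X]) - C z) ^ e i}
    exact Ideal.span_singleton_eq_span_singleton.mpr (hassoc.pow_pow)
  choose lam hlam using hlam
  have eqq : Module.AEval' φ ≃ₗ[ℂ[X]] Dsum lam e :=
    eqv.trans (DFinsupp.mapRange.linearEquiv fun i =>
      Submodule.quotEquivOfEq _ _ (hlam i))
  -- Step 4: transport the basis.
  set E : (Fin n → ℂ) ≃ₗ[ℂ] Dsum lam e :=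
    (Module.AEval'.of φ).trans (eqq.restrictScalars ℂ) with hE
  have hint : ∀ v : Fin n → ℂ, E (φ v) = (X : ℂ[X]) • E v := by
    intro v
    have h1 : E (φ v) = eqq ((X : ℂ[X]) • (Module.AEval'.of φ v)) := by
      rw [Module.AEval'.X_smul_of]
      rfl
    rw [h1, _root_.map_smul]
    rfl
  set bV : Module.Basis (Σ i : ι, Fin (e i)) ℂ (Fin n → ℂ) := (bD lam e).map E.symm with hbV
  have hMat : LinearMap.toMatrix bV bV φ
      = Matrix.blockDiagonal' (fun i => Jb (lam i) (e i)) := by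
    rw [← toMatrix_Xact]
    ext a c
    rw [LinearMap.toMatrix_apply, LinearMap.toMatrix_apply]
    have h1 : bV c = E.symm (bD lam e c) := rfl
    have h2 : φ (E.symm (bD lam e c)) = E.symm ((X:ℂ[X]) • bD lam e c) := by
      apply E.injective
      rw [hint, E.apply_symm_apply, E.apply_symm_apply]
    have h3 : ∀ x : Dsum lam e, bV.repr (E.symm x) = (bD lam e).repr x := by
      intro x
      rw [hbV, Module.Basis.map_repr]
      simp
    rw [h1, h2, h3]
    have hXact : Xact lam e (bD lam e c) = (X : ℂ[X]) • bD lam e c := rfl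
    rw [hXact]
  -- Step 5: reindex to `Fin n`.
  have hcard : Fintype.card (Σ i : ι, Fin (e i)) = n := by
    have h1 : Module.finrank ℂ (Fin n → ℂ) = Fintype.card (Σ i : ι, Fin (e i)) :=
      Module.finrank_eq_card_basis bV
    simpa using h1.symm
  set eqv2 : (Σ i : ι, Fin (e i)) ≃ Fin n := Fintype.equivOfCardEq (hcard.trans (Fintype.card_fin n).symm) with heqv2
  set bF : Module.Basis (Fin n) ℂ (Fin n → ℂ) := bV.reindex eqv2 with hbF
  have hMatF : LinearMap.toMatrix bF bF φ
      = (LinearMap.toMatrix bV bV φ).submatrix eqv2.symm eqv2.symm := by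
    ext a c
    rw [LinearMap.toMatrix_apply, Matrix.submatrix_apply, LinearMap.toMatrix_apply, hbF,
      Module.Basis.reindex_apply, Module.Basis.repr_reindex_apply]
  -- Step 6: conclude.
  have hsymm : Symmable (LinearMap.toMatrix bF bF φ) := by
    rw [hMatF, hMat]
    exact symmable_submatrix
      (symmable_blockDiagonal' _ (fun i => symmable_Jb (lam i) (e i))) eqv2.symm
  -- A is similar to `toMatrix bF bF φ`.
  set bPi : Module.Basis (Fin n) ℂ (Fin n → ℂ) := Pi.basisFun ℂ (Fin n) with hbPi
  have hA : LinearMap.toMatrix bPi bPi φ = A := by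
    rw [hbPi, LinearMap.toMatrix_eq_toMatrix', hφ]
    exact LinearMap.toMatrix'_toLin' A
  have hsim : A * (bPi.toMatrix bF) = (bPi.toMatrix bF) * LinearMap.toMatrix bF bF φ := by
    rw [← hA, linearMap_toMatrix_mul_basis_toMatrix, basis_toMatrix_mul_linearMap_toMatrix]
  letI := Module.Basis.invertibleToMatrix bPi bF
  exact Symmable.of_sim (isUnit_of_invertible (bPi.toMatrix bF)) hsim hsymm
end

section
/- If U is a unitary operator on a complex Hilbert space H, then there exist conjugations C and J on H such that U = C∘J (and consequently U* = J∘C). -/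
open scoped ComplexInnerProductSpace

noncomputable section

namespace GLaux

variable {H : Type*} [NormedAddCommGroup H] [InnerProductSpace ℂ H] [CompleteSpace H]

local notation "conj'" => starRingEnd ℂ

def W (u : unitary (H →L[ℂ] H)) (n : ℤ) : H →L[ℂ] H := ((u ^ n : unitary (H →L[ℂ] H)) : H →L[ℂ] H)

lemma W_add (u : unitary (H →L[ℂ] H)) (m n : ℤ) (y : H) : W u (m + n) y = W u m (W u n y) := by
  simp only [W, zpow_add]
  rfl

lemma W_zero (u : unitary (H →L[ℂ] H)) (y : H) : W u 0 y = y := by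
  simp only [W, zpow_zero]
  rfl

lemma W_one (u : unitary (H →L[ℂ] H)) (y : H) : W u 1 y = (u : H →L[ℂ] H) y := by
  simp only [W, zpow_one]

lemma W_neg_one (u : unitary (H →L[ℂ] H)) (y : H) :
    W u (-1) y = ContinuousLinearMap.adjoint (u : H →L[ℂ] H) y := by
  simp only [W, zpow_neg_one]
  rw [← Unitary.star_eq_inv, Unitary.coe_star, ContinuousLinearMap.star_eq_adjoint]

lemma W_succ (u : unitary (H →L[ℂ] H)) (n : ℤ) (y : H) :
    W u (n + 1) y = (u : H →L[ℂ] H) (W u n y) := by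
  rw [add_comm, W_add, W_one]

lemma W_pred (u : unitary (H →L[ℂ] H)) (n : ℤ) (y : H) :
    W u (n - 1) y = ContinuousLinearMap.adjoint (u : H →L[ℂ] H) (W u n y) := by
  rw [show n - 1 = -1 + n by ring, W_add, W_neg_one]

lemma inner_umap (v : unitary (H →L[ℂ] H)) (y z : H) :
    ⟪(v : H →L[ℂ] H) y, (v : H →L[ℂ] H) z⟫ = ⟪y, z⟫ := by
  have h1 : (ContinuousLinearMap.adjoint (v : H →L[ℂ] H)) ((v : H →L[ℂ] H) y) = y := by
    rw [← ContinuousLinearMap.star_eq_adjoint, ← ContinuousLinearMap.mul_apply,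
      (Unitary.mem_iff.mp v.2).1, ContinuousLinearMap.one_apply]
  rw [← ContinuousLinearMap.adjoint_inner_left, h1]

lemma inner_W_W (u : unitary (H →L[ℂ] H)) (x : H) (m n : ℤ) :
    ⟪W u m x, W u n x⟫ = ⟪x, W u (n - m) x⟫ := by
  have h : W u n x = W u m (W u (n - m) x) := by
    rw [← W_add]; congr 1; ring
  rw [h]
  exact inner_umap (u ^ m) x _

def ff (u : unitary (H →L[ℂ] H)) (x : H) (a : ℤ →₀ ℂ) : H := a.sum fun n c => c • W u n x

def gg (u : unitary (H →L[ℂ] H)) (x : H) (a : ℤ →₀ ℂ) : H :=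
  a.sum fun n c => conj' c • W u (-n) x

lemma ff_add (u : unitary (H →L[ℂ] H)) (x : H) (a b : ℤ →₀ ℂ) :
    ff u x (a + b) = ff u x a + ff u x b := by
  unfold ff
  exact Finsupp.sum_add_index' (fun i => by simp) (fun i c d => add_smul c d _)

lemma gg_add (u : unitary (H →L[ℂ] H)) (x : H) (a b : ℤ →₀ ℂ) :
    gg u x (a + b) = gg u x a + gg u x b := by
  unfold gg
  exact Finsupp.sum_add_index' (fun i => by simp) (fun i c d => by
    rw [map_add, add_smul])

lemma ff_smul (u : unitary (H →L[ℂ] H)) (x : H) (c : ℂ) (a : ℤ →₀ ℂ) :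
    ff u x (c • a) = c • ff u x a := by
  unfold ff
  rw [Finsupp.sum_smul_index (h := fun n d => d • W u n x) (fun i => zero_smul ℂ _),
    Finsupp.smul_sum]
  exact Finsupp.sum_congr fun n _ => mul_smul c (a n) _

lemma gg_smul (u : unitary (H →L[ℂ] H)) (x : H) (c : ℂ) (a : ℤ →₀ ℂ) :
    gg u x (c • a) = conj' c • gg u x a := by
  unfold gg
  rw [Finsupp.sum_smul_index (h := fun n d => conj' d • W u (-n) x) (fun i => by simp),
    Finsupp.smul_sum]
  exact Finsupp.sum_congr fun n _ => by rw [map_mul, mul_smul]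

lemma inner_gg_gg (u : unitary (H →L[ℂ] H)) (x : H) (a : ℤ →₀ ℂ) :
    ⟪gg u x a, gg u x a⟫ = ⟪ff u x a, ff u x a⟫ := by
  unfold ff gg Finsupp.sum
  rw [sum_inner, sum_inner]
  simp only [inner_sum, inner_smul_left, inner_smul_right, inner_W_W, RingHom.id_apply,
    starRingEnd_self_apply]
  rw [Finset.sum_comm]
  refine Finset.sum_congr rfl fun m _ => ?_
  refine Finset.sum_congr rfl fun n _ => ?_
  rw [show -m - -n = n - m by ring]
  ring

lemma norm_gg (u : unitary (H →L[ℂ] H)) (x : H) (a : ℤ →₀ ℂ) :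
    ‖gg u x a‖ = ‖ff u x a‖ := by
  have h := inner_gg_gg u x a
  rw [inner_self_eq_norm_sq_to_K, inner_self_eq_norm_sq_to_K] at h
  have h2 : ‖gg u x a‖ ^ 2 = ‖ff u x a‖ ^ 2 := by exact_mod_cast h
  calc ‖gg u x a‖ = Real.sqrt (‖gg u x a‖ ^ 2) := (Real.sqrt_sq (norm_nonneg _)).symm
    _ = Real.sqrt (‖ff u x a‖ ^ 2) := by rw [h2]
    _ = ‖ff u x a‖ := Real.sqrt_sq (norm_nonneg _)


def rv (a : ℤ →₀ ℂ) : ℤ →₀ ℂ := (a.mapRange conj' (map_zero _)).mapDomain Neg.neg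

def sh (a : ℤ →₀ ℂ) : ℤ →₀ ℂ := a.mapDomain (fun n => n + 1)

lemma ff_rv (u : unitary (H →L[ℂ] H)) (x : H) (a : ℤ →₀ ℂ) : ff u x (rv a) = gg u x a := by
  unfold ff gg rv
  rw [Finsupp.sum_mapDomain_index_inj neg_injective,
    Finsupp.sum_mapRange_index (fun i => by simp)]

lemma gg_rv (u : unitary (H →L[ℂ] H)) (x : H) (a : ℤ →₀ ℂ) : gg u x (rv a) = ff u x a := by
  unfold ff gg rv
  rw [Finsupp.sum_mapDomain_index_inj neg_injective,
    Finsupp.sum_mapRange_index (fun i => by simp)]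
  exact Finsupp.sum_congr fun n _ => by simp

lemma ff_sh (u : unitary (H →L[ℂ] H)) (x : H) (a : ℤ →₀ ℂ) :
    ff u x (sh a) = (u : H →L[ℂ] H) (ff u x a) := by
  unfold ff sh
  rw [Finsupp.sum_mapDomain_index_inj (add_left_injective 1), map_finsuppSum]
  exact Finsupp.sum_congr fun n _ => by rw [map_smul, W_succ]

lemma gg_sh (u : unitary (H →L[ℂ] H)) (x : H) (a : ℤ →₀ ℂ) :
    gg u x (sh a) = ContinuousLinearMap.adjoint (u : H →L[ℂ] H) (gg u x a) := by
  unfold gg sh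
  rw [Finsupp.sum_mapDomain_index_inj (add_left_injective 1), map_finsuppSum]
  refine Finsupp.sum_congr fun n _ => ?_
  rw [map_smul, show -(n + 1) = -n - 1 by ring, W_pred]

lemma ff_zero (u : unitary (H →L[ℂ] H)) (x : H) : ff u x 0 = 0 := by
  simp [ff]

lemma gg_zero (u : unitary (H →L[ℂ] H)) (x : H) : gg u x 0 = 0 := by
  simp [gg]

lemma ff_single (u : unitary (H →L[ℂ] H)) (x : H) :
    ff u x (Finsupp.single 0 1) = x := by
  rw [ff, Finsupp.sum_single_index (by simp), one_smul, W_zero]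

structure Good (U : H →L[ℂ] H) (G : Set (H × H)) : Prop where
  zero : ((0, 0) : H × H) ∈ G
  add : ∀ p ∈ G, ∀ q ∈ G, ((p.1 + q.1, p.2 + q.2) : H × H) ∈ G
  smul : ∀ (c : ℂ), ∀ p ∈ G, ((c • p.1, conj' c • p.2) : H × H) ∈ G
  symm : ∀ p ∈ G, ((p.2, p.1) : H × H) ∈ G
  norm : ∀ p ∈ G, ‖p.2‖ = ‖p.1‖
  intertwine : ∀ p ∈ G, ((U p.1, ContinuousLinearMap.adjoint U p.2) : H × H) ∈ G

lemma Good.neg {U : H →L[ℂ] H} {G : Set (H × H)} (h : Good U G) {p : H × H} (hp : p ∈ G) :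
    ((-p.1, -p.2) : H × H) ∈ G := by
  have := h.smul (-1) p hp
  simpa using this

lemma Good.sub {U : H →L[ℂ] H} {G : Set (H × H)} (h : Good U G) {p q : H × H}
    (hp : p ∈ G) (hq : q ∈ G) : ((p.1 - q.1, p.2 - q.2) : H × H) ∈ G := by
  have := h.add p hp _ (h.neg hq)
  simpa [sub_eq_add_neg] using this

lemma Good.funct {U : H →L[ℂ] H} {G : Set (H × H)} (h : Good U G) {p q : H × H}
    (hp : p ∈ G) (hq : q ∈ G) (h1 : p.1 = q.1) : p.2 = q.2 := by
  have hs := h.sub hp hq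
  rw [h1, sub_self] at hs
  have hn := h.norm _ hs
  rwa [norm_zero, norm_eq_zero, sub_eq_zero] at hn

lemma good_singleton (U : H →L[ℂ] H) : Good U {((0 : H), (0 : H))} := by
  constructor <;> simp +contextual [Set.mem_singleton_iff, Prod.ext_iff]

lemma good_sUnion (U : H →L[ℂ] H) {c : Set (Set (H × H))} (hc : IsChain (· ⊆ ·) c)
    (hne : c.Nonempty) (hall : ∀ G ∈ c, Good U G) : Good U (⋃₀ c) := by
  obtain ⟨G₀, hG₀⟩ := hne
  constructor
  · exact ⟨G₀, hG₀, (hall _ hG₀).zero⟩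
  · rintro p ⟨G₁, h₁, hp⟩ q ⟨G₂, h₂, hq⟩
    rcases hc.total h₁ h₂ with h | h
    · exact ⟨G₂, h₂, (hall _ h₂).add p (h hp) q hq⟩
    · exact ⟨G₁, h₁, (hall _ h₁).add p hp q (h hq)⟩
  · rintro cc p ⟨G₁, h₁, hp⟩
    exact ⟨G₁, h₁, (hall _ h₁).smul cc p hp⟩
  · rintro p ⟨G₁, h₁, hp⟩
    exact ⟨G₁, h₁, (hall _ h₁).symm p hp⟩
  · rintro p ⟨G₁, h₁, hp⟩
    exact (hall _ h₁).norm p hp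
  · rintro p ⟨G₁, h₁, hp⟩
    exact ⟨G₁, h₁, (hall _ h₁).intertwine p hp⟩

def domSub {U : H →L[ℂ] H} {G : Set (H × H)} (hG : Good U G) : Submodule ℂ H where
  carrier := {y | ∃ z, (y, z) ∈ G}
  zero_mem' := ⟨0, hG.zero⟩
  add_mem' := fun ⟨z, hz⟩ ⟨w, hw⟩ => ⟨_, hG.add _ hz _ hw⟩
  smul_mem' := fun c y ⟨z, hz⟩ => ⟨_, hG.smul c _ hz⟩

lemma domSub_U {U : H →L[ℂ] H} {G : Set (H × H)} (hG : Good U G) {y : H}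
    (hy : y ∈ domSub hG) : U y ∈ domSub hG := by
  obtain ⟨z, hz⟩ := hy
  exact ⟨_, hG.intertwine _ hz⟩

lemma domSub_A {U : H →L[ℂ] H} {G : Set (H × H)} (hG : Good U G) {y : H}
    (hy : y ∈ domSub hG) : ContinuousLinearMap.adjoint U y ∈ domSub hG := by
  obtain ⟨z, hz⟩ := hy
  exact ⟨_, hG.symm _ (hG.intertwine _ (hG.symm _ hz))⟩

lemma domSub_W {U : H →L[ℂ] H} (hU : U ∈ unitary (H →L[ℂ] H)) {G : Set (H × H)}
    (hG : Good U G) (n : ℤ) {y : H} (hy : y ∈ domSub hG) :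
    W ⟨U, hU⟩ n y ∈ domSub hG := by
  induction n using Int.induction_on with
  | zero => rwa [W_zero]
  | succ k ih => rw [show ((k : ℤ) + 1) = (k : ℤ) + 1 from rfl, W_succ]; exact domSub_U hG ih
  | pred k ih => rw [show (-(k : ℤ) - 1) = (-(k : ℤ)) - 1 from rfl, W_pred]; exact domSub_A hG ih


lemma norm_add_eq_of {a b a' b' : H} (h1 : ⟪a, b⟫ = 0) (h2 : ⟪a', b'⟫ = 0)
    (ha : ‖a'‖ = ‖a‖) (hb : ‖b'‖ = ‖b‖) : ‖a' + b'‖ = ‖a + b‖ := by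
  have e1 := norm_add_sq (𝕜 := ℂ) a b
  have e2 := norm_add_sq (𝕜 := ℂ) a' b'
  rw [h1] at e1
  rw [h2] at e2
  simp only [map_zero, mul_zero, add_zero] at e1 e2
  have h3 : ‖a' + b'‖ ^ 2 = ‖a + b‖ ^ 2 := by rw [e1, e2, ha, hb]
  calc ‖a' + b'‖ = Real.sqrt (‖a' + b'‖ ^ 2) := (Real.sqrt_sq (norm_nonneg _)).symm
    _ = Real.sqrt (‖a + b‖ ^ 2) := by rw [h3]
    _ = ‖a + b‖ := Real.sqrt_sq (norm_nonneg _)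

lemma exists_good_dense (U : H →L[ℂ] H) (hU : U ∈ unitary (H →L[ℂ] H)) :
    ∃ G : Set (H × H), Good U G ∧ Dense {y : H | ∃ z, (y, z) ∈ G} := by
  obtain ⟨G, -, hmax⟩ := zorn_subset_nonempty {G : Set (H × H) | Good U G}
    (fun c hcS hchain hne => ⟨⋃₀ c, good_sUnion U hchain hne (fun G hG => hcS hG),
      fun s hs => Set.subset_sUnion_of_mem hs⟩) {((0 : H), (0 : H))} (good_singleton U)
  have hG : Good U G := hmax.prop
  refine ⟨G, hG, ?_⟩
  by_contra hnd
  set u : unitary (H →L[ℂ] H) := ⟨U, hU⟩ with hu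
  have hA : ContinuousLinearMap.adjoint U = ContinuousLinearMap.adjoint (u : H →L[ℂ] H) := rfl
  set K : Submodule ℂ H := domSub hG with hK
  have hKset : (K : Set H) = {y : H | ∃ z, (y, z) ∈ G} := rfl
  set Kc : Submodule ℂ H := K.topologicalClosure with hKc
  have hKcT : Kc ≠ ⊤ := by
    intro h
    exact hnd (by rw [← hKset]; exact Submodule.dense_iff_topologicalClosure_eq_top.mpr h)
  have hKcB : Kcᗮ ≠ ⊥ := fun h => hKcT (Submodule.orthogonal_eq_bot_iff.mp h)
  obtain ⟨x, hxo, hx0⟩ := Submodule.exists_mem_ne_zero_of_ne_bot hKcB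
  -- x is orthogonal to everything reachable from K
  have hWx : ∀ (k : H), k ∈ K → ∀ n : ℤ, ⟪k, W u n x⟫ = 0 := by
    intro k hk n
    have h1 : W u (-n) k ∈ K := domSub_W hU hG (-n) hk
    have h2 : ⟪W u (-n) k, x⟫ = 0 :=
      (Submodule.mem_orthogonal Kc x).mp hxo _ (K.le_topologicalClosure h1)
    have h3 : W u (-n) (W u n x) = x := by rw [← W_add, neg_add_cancel, W_zero]
    calc ⟪k, W u n x⟫ = ⟪W u (-n) k, W u (-n) (W u n x)⟫ := (inner_umap (u ^ (-n)) _ _).symm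
      _ = ⟪W u (-n) k, x⟫ := by rw [h3]
      _ = 0 := h2
  have hkff : ∀ (k : H), k ∈ K → ∀ a : ℤ →₀ ℂ, ⟪k, ff u x a⟫ = 0 := by
    intro k hk a
    rw [ff, Finsupp.sum, inner_sum]
    refine Finset.sum_eq_zero fun n _ => ?_
    rw [inner_smul_right, hWx k hk n, mul_zero]
  have hkgg : ∀ (k : H), k ∈ K → ∀ a : ℤ →₀ ℂ, ⟪k, gg u x a⟫ = 0 := by
    intro k hk a
    rw [gg, Finsupp.sum, inner_sum]
    refine Finset.sum_eq_zero fun n _ => ?_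
    rw [inner_smul_right, hWx k hk (-n), mul_zero]
  -- the extended graph
  set Gx : Set (H × H) := {p | ∃ a : ℤ →₀ ℂ, p.1 = ff u x a ∧ p.2 = gg u x a} with hGx
  set G' : Set (H × H) := {p | ∃ q ∈ G, ∃ r ∈ Gx, p = q + r} with hG'
  have hGsub : G ⊆ G' := fun p hp =>
    ⟨p, hp, (0, 0), ⟨0, by simp [ff_zero, gg_zero]⟩, by simp⟩
  have hG'good : Good U G' := by
    constructor
    · exact hGsub hG.zero
    · rintro p ⟨q, hq, r, ⟨a, ha1, ha2⟩, rfl⟩ p' ⟨q', hq', r', ⟨a', ha1', ha2'⟩, rfl⟩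
      refine ⟨(q.1 + q'.1, q.2 + q'.2), hG.add q hq q' hq',
        (r.1 + r'.1, r.2 + r'.2), ⟨a + a', by simp [ha1, ha1', ff_add],
          by simp [ha2, ha2', gg_add]⟩, ?_⟩
      simp [Prod.ext_iff]
      constructor <;> abel
    · rintro c p ⟨q, hq, r, ⟨a, ha1, ha2⟩, rfl⟩
      refine ⟨(c • q.1, conj' c • q.2), hG.smul c q hq,
        (c • r.1, conj' c • r.2), ⟨c • a, by simp [ha1, ff_smul], by simp [ha2, gg_smul]⟩, ?_⟩
      simp [Prod.ext_iff, smul_add]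
    · rintro p ⟨q, hq, r, ⟨a, ha1, ha2⟩, rfl⟩
      exact ⟨(q.2, q.1), hG.symm q hq, (r.2, r.1),
        ⟨rv a, by rw [ff_rv, ha2], by rw [gg_rv, ha1]⟩, rfl⟩
    · rintro p ⟨q, hq, r, ⟨a, ha1, ha2⟩, rfl⟩
      have hq1 : q.1 ∈ K := ⟨q.2, hq⟩
      have hq2 : q.2 ∈ K := ⟨q.1, hG.symm q hq⟩
      exact norm_add_eq_of (ha1 ▸ hkff q.1 hq1 a) (ha2 ▸ hkgg q.2 hq2 a)
        (hG.norm q hq) (by rw [ha1, ha2, norm_gg])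
    · rintro p ⟨q, hq, r, ⟨a, ha1, ha2⟩, rfl⟩
      refine ⟨(U q.1, ContinuousLinearMap.adjoint U q.2), hG.intertwine q hq,
        (U r.1, ContinuousLinearMap.adjoint U r.2),
        ⟨sh a, by rw [ff_sh, ha1], by rw [hA, gg_sh, ha2]⟩, ?_⟩
      simp [Prod.ext_iff]
  have hGeq : G' ⊆ G := hmax.2 hG'good hGsub
  have hxK : x ∈ K := by
    have : ((x, gg u x (Finsupp.single 0 1)) : H × H) ∈ G' :=
      ⟨(0, 0), hG.zero, (x, gg u x (Finsupp.single 0 1)),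
        ⟨Finsupp.single 0 1, (ff_single u x).symm, rfl⟩, by simp⟩
    exact ⟨_, hGeq this⟩
  have : ⟪x, x⟫ = (0 : ℂ) :=
    (Submodule.mem_orthogonal Kc x).mp hxo x (K.le_topologicalClosure hxK)
  exact hx0 (inner_self_eq_zero.mp this)

lemma norm_eq_of_inner_self {a b : H} (h : ⟪a, a⟫ = ⟪b, b⟫) : ‖a‖ = ‖b‖ := by
  rw [inner_self_eq_norm_sq_to_K, inner_self_eq_norm_sq_to_K] at h
  have h2 : ‖a‖ ^ 2 = ‖b‖ ^ 2 := by exact_mod_cast h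
  calc ‖a‖ = Real.sqrt (‖a‖ ^ 2) := (Real.sqrt_sq (norm_nonneg _)).symm
    _ = Real.sqrt (‖b‖ ^ 2) := by rw [h2]
    _ = ‖b‖ := Real.sqrt_sq (norm_nonneg _)

lemma exists_J (U : H →L[ℂ] H) (hU : U ∈ unitary (H →L[ℂ] H)) :
    ∃ Jh : H → H, (∀ y z : H, Jh (y + z) = Jh y + Jh z) ∧
      (∀ (c : ℂ) (y : H), Jh (c • y) = conj' c • Jh y) ∧
      (∀ y : H, Jh (Jh y) = y) ∧ (∀ y : H, ‖Jh y‖ = ‖y‖) ∧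
      (∀ y : H, Jh (U y) = ContinuousLinearMap.adjoint U (Jh y)) := by
  classical
  obtain ⟨G, hG, hdense⟩ := exists_good_dense U hU
  set K : Set H := {y : H | ∃ z, (y, z) ∈ G} with hKdef
  set J0 : H → H := fun y => if h : ∃ z, (y, z) ∈ G then h.choose else 0 with hJ0def
  have hJ0 : ∀ y ∈ K, ((y, J0 y) : H × H) ∈ G := by
    intro y hy
    have hy' : ∃ z, (y, z) ∈ G := hy
    have he : J0 y = hy'.choose := by rw [hJ0def]; exact dif_pos hy'
    rw [he]
    exact hy'.choose_spec
  have hJ0K : ∀ y ∈ K, J0 y ∈ K := fun y hy => ⟨y, hG.symm _ (hJ0 y hy)⟩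
  have ue : IsUniformEmbedding (Subtype.val : K → H) := isUniformEmbedding_subtype_val
  have dr : DenseRange (Subtype.val : K → H) := hdense.denseRange_val
  set f₀ : K → H := fun k => J0 k.1 with hf₀def
  have hisom : Isometry f₀ := by
    refine Isometry.of_dist_eq fun k k' => ?_
    rw [dist_eq_norm, Subtype.dist_eq, dist_eq_norm]
    have hsub := hG.sub (hJ0 _ k.2) (hJ0 _ k'.2)
    exact hG.norm _ hsub
  have hf₀ : UniformContinuous f₀ := hisom.uniformContinuous
  set Jh : H → H := (ue.isUniformInducing.isDenseInducing dr).extend f₀ with hJhdef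
  have hJK : ∀ y (hy : y ∈ K), Jh y = J0 y := fun y hy =>
    uniformly_extend_of_ind ue.isUniformInducing dr hf₀ ⟨y, hy⟩
  have hcont : Continuous Jh :=
    (uniformContinuous_uniformly_extend ue.isUniformInducing dr hf₀).continuous
  have hadd : ∀ y z : H, Jh (y + z) = Jh y + Jh z := by
    have heq : (fun p : H × H => Jh (p.1 + p.2)) = fun p : H × H => Jh p.1 + Jh p.2 := by
      refine Continuous.ext_on (hdense.prod hdense) (hcont.comp continuous_add)
        ((hcont.comp continuous_fst).add (hcont.comp continuous_snd)) ?_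
      rintro ⟨y, z⟩ ⟨hy, hz⟩
      have hyz : y + z ∈ K := ⟨_, hG.add _ (hJ0 _ hy) _ (hJ0 _ hz)⟩
      simp only
      rw [hJK _ hy, hJK _ hz, hJK _ hyz]
      exact hG.funct (hJ0 _ hyz) (hG.add _ (hJ0 _ hy) _ (hJ0 _ hz)) rfl
    exact fun y z => congrFun heq (y, z)
  have hsmul : ∀ (c : ℂ) (y : H), Jh (c • y) = conj' c • Jh y := by
    intro c
    have heq : (fun y : H => Jh (c • y)) = fun y : H => conj' c • Jh y := by
      refine Continuous.ext_on hdense (hcont.comp (continuous_const_smul c))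
        (hcont.const_smul (conj' c)) ?_
      intro y hy
      have hcy : c • y ∈ K := ⟨_, hG.smul c _ (hJ0 _ hy)⟩
      simp only
      rw [hJK _ hy, hJK _ hcy]
      exact hG.funct (hJ0 _ hcy) (hG.smul c _ (hJ0 _ hy)) rfl
    exact fun y => congrFun heq y
  have hnorm : ∀ y : H, ‖Jh y‖ = ‖y‖ := by
    have heq : (fun y : H => ‖Jh y‖) = fun y : H => ‖y‖ := by
      refine Continuous.ext_on hdense (continuous_norm.comp hcont) continuous_norm ?_
      intro y hy
      simp only
      rw [hJK _ hy]
      exact hG.norm _ (hJ0 _ hy)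
    exact fun y => congrFun heq y
  have hinv : ∀ y : H, Jh (Jh y) = y := by
    have heq : (fun y : H => Jh (Jh y)) = fun y : H => y := by
      refine Continuous.ext_on hdense (hcont.comp hcont) continuous_id ?_
      intro y hy
      simp only
      rw [hJK _ hy, hJK _ (hJ0K _ hy)]
      exact hG.funct (hJ0 _ (hJ0K _ hy)) (hG.symm _ (hJ0 _ hy)) rfl
    exact fun y => congrFun heq y
  have hint : ∀ y : H, Jh (U y) = ContinuousLinearMap.adjoint U (Jh y) := by
    have heq : (fun y : H => Jh (U y)) =
        fun y : H => ContinuousLinearMap.adjoint U (Jh y) := by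
      refine Continuous.ext_on hdense (hcont.comp U.continuous)
        ((ContinuousLinearMap.adjoint U).continuous.comp hcont) ?_
      intro y hy
      have hUy : U y ∈ K := ⟨_, hG.intertwine _ (hJ0 _ hy)⟩
      simp only
      rw [hJK _ hy, hJK _ hUy]
      exact hG.funct (hJ0 _ hUy) (hG.intertwine _ (hJ0 _ hy)) rfl
    exact fun y => congrFun heq y
  exact ⟨Jh, hadd, hsmul, hinv, hnorm, hint⟩

end GLaux

theorem stmt4 {H : Type*} [NormedAddCommGroup H] [InnerProductSpace ℂ H] [CompleteSpace H]
    (U : H →L[ℂ] H) (hU : U ∈ unitary (H →L[ℂ] H)) :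
    ∃ C J : H → H, IsConjugation C ∧ IsConjugation J ∧
      (∀ x, U x = C (J x)) ∧
      ∀ x, ContinuousLinearMap.adjoint U x = J (C x) := by
  obtain ⟨Jh, hadd, hsmul, hinv, hnorm, hint⟩ := GLaux.exists_J U hU
  have hUA : ∀ y : H, U (ContinuousLinearMap.adjoint U y) = y := by
    intro y
    rw [← ContinuousLinearMap.star_eq_adjoint, ← ContinuousLinearMap.mul_apply,
      (Unitary.mem_iff.mp hU).2, ContinuousLinearMap.one_apply]
  have hUnorm : ∀ y : H, ‖U y‖ = ‖y‖ := fun y =>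
    GLaux.norm_eq_of_inner_self (GLaux.inner_umap ⟨U, hU⟩ y y)
  refine ⟨fun y => U (Jh y), Jh, ⟨?_, ?_, ?_, ?_⟩, ⟨hadd, hsmul, hinv, hnorm⟩, ?_, ?_⟩
  · intro x y
    beta_reduce
    rw [hadd, map_add]
  · intro a x
    beta_reduce
    rw [hsmul, map_smul]
  · intro x
    beta_reduce
    rw [hint, hinv, hUA]
  · intro x
    beta_reduce
    rw [hUnorm, hnorm]
  · intro x
    beta_reduce
    rw [hinv]
  · intro x
    beta_reduce
    rw [hint, hinv]

end
end

section
/- Let C be a conjugation on a complex Hilbert space H and let T be a bounded C-symmetric operator on H. Let |T| = √(T*T) denote the unique positive square root of T*T. Then there exists a conjugation J on H that commutes with |T| (J∘|T| = |T|∘J as maps on H) such that T = C∘J∘|T|. -/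
open scoped ComplexInnerProductSpace ContinuousFunctionalCalculus NNReal

set_option maxHeartbeats 2000000
set_option synthInstance.maxHeartbeats 1000000

noncomputable section

section Aux

variable {H : Type*} [NormedAddCommGroup H] [InnerProductSpace ℂ H]

/-- Any complex Hilbert space admits a conjugation. -/
lemma aux_exists_isConjugation (E : Type*) [NormedAddCommGroup E] [InnerProductSpace ℂ E]
    [CompleteSpace E] : ∃ J : E → E, IsConjugation J := by
  obtain ⟨w, b, -⟩ := exists_hilbertBasis ℂ E
  refine ⟨fun x => b.repr.symm (star (b.repr x)), fun x y => by simp [star_add], fun a x => ?_,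
    fun x => by simp, fun x => by simp⟩
  have : star (a • b.repr x) = (starRingEnd ℂ) a • star (b.repr x) := star_smul a _
  simp [this]

/-- A continuous real-linear map commuting with the square of a positive operator
commutes with the operator itself. -/
lemma aux_commute_sqrt [CompleteSpace H] (R : H →L[ℂ] H) (hRpos : R.IsPositive) (A : H → H)
    (hAcont : Continuous A) (hAadd : ∀ x y, A (x + y) = A x + A y)
    (hAsmulR : ∀ (r : ℝ) (x : H), A ((r : ℂ) • x) = (r : ℂ) • A x)
    (hAQ : ∀ x, A (R (R x)) = R (R (A x))) : ∀ x, A (R x) = R (A x) := by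
  have hR : IsSelfAdjoint R := hRpos.isSelfAdjoint
  set Q : H →L[ℂ] H := R ^ 2 with hQdef
  have hQapp : ∀ x, Q x = R (R x) := fun x => by
    simp [hQdef, pow_two, ContinuousLinearMap.mul_apply]
  have hQsa : IsSelfAdjoint Q := hR.pow 2
  have hQ0 : (0 : H →L[ℂ] H) ≤ Q := by
    have : Q = star R * R := by rw [hR.star_eq, hQdef, pow_two]
    rw [this]
    exact star_mul_self_nonneg R
  set g : ℝ → ℝ := fun x : ℝ => ((NNReal.sqrt x.toNNReal : ℝ≥0) : ℝ) with hgdef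
  have hg : Continuous g := by
    exact NNReal.continuous_coe.comp (NNReal.continuous_sqrt.comp continuous_real_toNNReal)
  have hRcfc : R = cfc g Q := by
    have h1 : CFC.sqrt Q = R :=
      CFC.sqrt_sq R ((ContinuousLinearMap.nonneg_iff_isPositive R).mpr hRpos)
    have h2 : CFC.sqrt Q = cfc g Q := by rw [CFC.sqrt_eq_cfc, cfc_nnreal_eq_real _ _ hQ0]
    rw [← h1, h2]
  set Z : Set (H →L[ℂ] H) := {X | ∀ x, A (X x) = X (A x)} with hZdef
  have hZclosed : IsClosed Z := by
    have : Z = ⋂ x : H, {X : H →L[ℂ] H | A (X x) = X (A x)} := by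
      ext X; simp [hZdef, Set.mem_iInter]
    rw [this]
    refine isClosed_iInter fun x => isClosed_eq ?_ ?_
    · exact hAcont.comp (ContinuousLinearMap.apply ℂ H x).continuous
    · exact (ContinuousLinearMap.apply ℂ H (A x)).continuous
  have hpow : ∀ n : ℕ, ∀ x, A ((Q ^ n) x) = (Q ^ n) (A x) := by
    intro n
    induction n with
    | zero => intro x; simp
    | succ n ih =>
      intro x
      have h1 : (Q ^ (n + 1)) x = (Q ^ n) (Q x) := by
        rw [pow_succ, ContinuousLinearMap.mul_apply]
      have h2 : (Q ^ (n + 1)) (A x) = (Q ^ n) (Q (A x)) := by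
        rw [pow_succ, ContinuousLinearMap.mul_apply]
      rw [h1, h2, ih, hQapp, hQapp, hAQ]
  have hpoly : ∀ p : Polynomial ℝ, (Polynomial.aeval Q p : H →L[ℂ] H) ∈ Z := by
    intro p
    induction p using Polynomial.induction_on' with
    | add p q hp hq =>
      intro x
      rw [map_add, ContinuousLinearMap.add_apply, ContinuousLinearMap.add_apply, hAadd, hp, hq]
    | monomial n r =>
      intro x
      rw [Polynomial.aeval_monomial]
      have halg : algebraMap ℝ (H →L[ℂ] H) r = r • (1 : H →L[ℂ] H) :=
        Algebra.algebraMap_eq_smul_one r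
      rw [halg, ContinuousLinearMap.mul_apply, ContinuousLinearMap.mul_apply,
        ContinuousLinearMap.smul_apply, ContinuousLinearMap.smul_apply,
        ContinuousLinearMap.one_apply, ContinuousLinearMap.one_apply]
      have hs : ∀ v : H, r • v = (r : ℂ) • v := fun v => rfl
      rw [hs, hs, hAsmulR, hpow]
  have key : ∀ f : C(spectrum ℝ Q, ℝ), cfcHom (R := ℝ) hQsa f ∈ Z := by
    intro f
    have hsub : (polynomialFunctions (spectrum ℝ Q) : Set C(spectrum ℝ Q, ℝ)) ⊆
        (cfcHom (R := ℝ) hQsa) ⁻¹' Z := by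
      intro u hu
      rw [polynomialFunctions_coe] at hu
      obtain ⟨p, rfl⟩ := hu
      have : cfcHom (R := ℝ) hQsa (Polynomial.toContinuousMapOnAlgHom (spectrum ℝ Q) p)
          = Polynomial.aeval Q p := by
        rw [← cfc_polynomial p Q,
          cfc_apply (fun a : ℝ => p.eval a) Q hQsa p.continuous.continuousOn]
        congr 1
      exact Set.mem_preimage.mpr (this ▸ hpoly p)
    have hclosedpre : IsClosed ((cfcHom (R := ℝ) hQsa) ⁻¹' Z) :=
      hZclosed.preimage (cfcHom_isClosedEmbedding (R := ℝ) hQsa).continuous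
    have hmem : f ∈ (polynomialFunctions (spectrum ℝ Q)).topologicalClosure := by
      rw [polynomialFunctions.topologicalClosure]; trivial
    exact closure_minimal hsub hclosedpre hmem
  have hfin : R = cfcHom (R := ℝ) hQsa ⟨_, hg.continuousOn.restrict⟩ := by
    rw [hRcfc]; exact cfc_apply g Q hQsa hg.continuousOn
  intro x
  have h := key ⟨_, hg.continuousOn.restrict⟩ x
  rw [← hfin] at h
  exact h

/-- A conjugation is antiunitary. -/
lemma aux_conj_inner (C : H → H) (hC : IsConjugation C) (x y : H) :
    (inner ℂ (C x) (C y) : ℂ) = inner ℂ y x := by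
  obtain ⟨Cadd, Csmul, Cinv, Cnorm⟩ := hC
  have hIK : (RCLike.I : ℂ) = Complex.I := RCLike.I_to_complex
  have hsmulI : ∀ z : H, Complex.I • C z = C (-(Complex.I • z)) := by
    intro z
    have h := Csmul (-Complex.I) z
    simp only [map_neg, Complex.conj_I, neg_neg] at h
    rw [← neg_smul, h]
  have e1 : ‖C x + C y‖ = ‖y + x‖ := by rw [← Cadd, Cnorm, add_comm]
  have hCneg : ∀ z, C (-z) = -C z := by
    intro z
    have := Csmul (-1) z
    simpa using this
  have e2 : ‖C x - C y‖ = ‖y - x‖ := by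
    have h : C x - C y = C (x - y) := by
      rw [sub_eq_add_neg, sub_eq_add_neg, Cadd, hCneg]
    rw [h, Cnorm, norm_sub_rev]
  have e3 : ‖C x - Complex.I • C y‖ = ‖y - Complex.I • x‖ := by
    have h1 : C x - Complex.I • C y = C (x + Complex.I • y) := by
      rw [hsmulI, sub_eq_add_neg, ← hCneg, neg_neg, Cadd]
    have h2 : x + Complex.I • y = Complex.I • (y - Complex.I • x) := by
      rw [smul_sub, smul_smul, Complex.I_mul_I, neg_one_smul, sub_neg_eq_add, add_comm]
    rw [h1, Cnorm, h2, norm_smul, Complex.norm_I, one_mul]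
  have e4 : ‖C x + Complex.I • C y‖ = ‖y + Complex.I • x‖ := by
    have h1 : C x + Complex.I • C y = C (x - Complex.I • y) := by
      rw [hsmulI, sub_eq_add_neg, Cadd]
    have h2 : (-Complex.I) • (y + Complex.I • x) = x - Complex.I • y := by
      rw [smul_add, smul_smul, neg_mul, Complex.I_mul_I, neg_neg, one_smul, neg_smul,
        sub_eq_add_neg, add_comm]
    rw [h1, Cnorm, ← h2, norm_smul]
    simp
  rw [inner_eq_sum_norm_sq_div_four, inner_eq_sum_norm_sq_div_four, hIK, e1, e2, e3, e4]

end Aux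

theorem stmt6 {H : Type*} [NormedAddCommGroup H] [InnerProductSpace ℂ H] [CompleteSpace H]
    (C : H → H) (hC : IsConjugation C)
    (T : H →L[ℂ] H) (hT : ∀ x, T x = C (ContinuousLinearMap.adjoint T (C x)))
    (R : H →L[ℂ] H) (hRpos : R.IsPositive)
    (hRsq : R ∘L R = (ContinuousLinearMap.adjoint T) ∘L T) :
    ∃ J : H → H, IsConjugation J ∧ (∀ x, J (R x) = R (J x)) ∧
      ∀ x, T x = C (J (R x)) := by
  have hCinner := aux_conj_inner C hC
  obtain ⟨Cadd, Csmul, Cinv, Cnorm⟩ := hC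
  set T' := ContinuousLinearMap.adjoint T with hT'def
  have hRsa : IsSelfAdjoint R := hRpos.isSelfAdjoint
  -- basic facts about C
  have hC0 : C 0 = 0 := by
    have h := Cadd 0 0
    rw [add_zero] at h
    have h2 : C 0 + 0 = C 0 + C 0 := by rw [add_zero]; exact h
    exact (add_left_cancel h2).symm
  have hCneg : ∀ x, C (-x) = -C x := by
    intro x
    have := Csmul (-1) x
    simpa using this
  have hCsub : ∀ x y, C (x - y) = C x - C y := by
    intro x y
    rw [sub_eq_add_neg, Cadd, hCneg, sub_eq_add_neg]
  have hCiso : Isometry C :=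
    Isometry.of_dist_eq fun x y => by rw [dist_eq_norm, dist_eq_norm, ← hCsub, Cnorm]
  have hCadj : ∀ u v, (inner ℂ (C u) v : ℂ) = inner ℂ (C v) u := by
    intro u v
    conv_lhs => rw [← Cinv v]
    exact hCinner u (C v)
  -- the antilinear operator A = C ∘ T
  set A : H → H := fun x => C (T x) with hAdef
  have hAcont : Continuous A := hCiso.continuous.comp T.continuous
  have hAadd : ∀ x y, A (x + y) = A x + A y := fun x y => by
    simp only [hAdef, map_add, Cadd]
  have hAsmul : ∀ (a : ℂ) x, A (a • x) = (starRingEnd ℂ) a • A x := fun a x => by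
    simp only [hAdef, map_smul, Csmul]
  have hA0 : A 0 = 0 := by simp only [hAdef, map_zero, hC0]
  have hAsub : ∀ x y, A (x - y) = A x - A y := fun x y => by
    simp only [hAdef, map_sub, hCsub]
  -- C ∘ T = T' ∘ C
  have hTadj : ∀ x, C (T x) = T' (C x) := fun x => by rw [hT x, Cinv]
  -- R ∘ R = T' ∘ T pointwise
  have hRR : ∀ x, R (R x) = T' (T x) := fun x => by
    have := DFunLike.congr_fun hRsq x
    simpa using this
  have hinner_self : ∀ x, (inner ℂ (R x) (R x) : ℂ) = inner ℂ (T x) (T x) := by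
    intro x
    calc (inner ℂ (R x) (R x) : ℂ)
        = inner ℂ x (R (R x)) := by
          have h := ContinuousLinearMap.adjoint_inner_left R (R x) x
          rw [hRsa.adjoint_eq] at h
          exact h
      _ = inner ℂ x (T' (T x)) := by rw [hRR]
      _ = inner ℂ (T x) (T x) := ContinuousLinearMap.adjoint_inner_right T x (T x)
  have hnormRT : ∀ x, ‖R x‖ = ‖T x‖ := by
    intro x
    have h := hinner_self x
    rw [inner_self_eq_norm_sq_to_K, inner_self_eq_norm_sq_to_K] at h
    have h2 : (‖R x‖ : ℝ) ^ 2 = ‖T x‖ ^ 2 := by exact_mod_cast h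
    nlinarith [norm_nonneg (R x), norm_nonneg (T x)]
  have hAnorm : ∀ x, ‖A x‖ = ‖R x‖ := fun x => by
    show ‖C (T x)‖ = ‖R x‖
    rw [Cnorm, hnormRT]
  -- A ∘ A = R ∘ R
  have hAA : ∀ x, A (A x) = R (R x) := by
    intro x
    show C (T (C (T x))) = R (R x)
    rw [hTadj (C (T x)), Cinv, hRR]
  have hAQ : ∀ x, A (R (R x)) = R (R (A x)) := by
    intro x
    rw [← hAA x, hAA (A x)]
  have hAsmulR : ∀ (r : ℝ) (x : H), A ((r : ℂ) • x) = (r : ℂ) • A x := by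
    intro r x
    rw [hAsmul]
    congr 1
    exact Complex.conj_ofReal r
  -- A commutes with R
  have hAR : ∀ x, A (R x) = R (A x) :=
    aux_commute_sqrt R hRpos A hAcont hAadd hAsmulR hAQ
  -- the kernel of R
  set K : Submodule ℂ H := LinearMap.ker (R : H →ₗ[ℂ] H) with hKdef
  haveI instK : CompleteSpace K := by rw [hKdef]; infer_instance
  have hKR : ∀ k, k ∈ K → R k = 0 := by
    intro k hk
    rw [hKdef] at hk
    exact LinearMap.mem_ker.mp hk
  have hKmem : ∀ k, R k = 0 → k ∈ K := by
    intro k hk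
    rw [hKdef]
    exact LinearMap.mem_ker.mpr hk
  have hAk : ∀ k, k ∈ K → A k = 0 := by
    intro k hk
    have : ‖A k‖ = 0 := by rw [hAnorm, hKR k hk, norm_zero]
    exact norm_eq_zero.mp this
  have hTk : ∀ k, k ∈ K → T k = 0 := by
    intro k hk
    have : ‖T k‖ = 0 := by rw [← hnormRT, hKR k hk, norm_zero]
    exact norm_eq_zero.mp this
  have hAperp : ∀ x k, k ∈ K → (inner ℂ (A x) k : ℂ) = 0 := by
    intro x k hk
    have h1 : (inner ℂ (A x) k : ℂ) = inner ℂ (C k) (T x) := hCadj (T x) k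
    have h2 : (inner ℂ (C k) (T x) : ℂ) = inner ℂ (T' (C k)) x :=
      (ContinuousLinearMap.adjoint_inner_left T x (C k)).symm
    have h3 : T' (C k) = 0 := by
      rw [← hTadj k, hTk k hk, hC0]
    rw [h1, h2, h3, inner_zero_left]
  have hRperp : ∀ x k, k ∈ K → (inner ℂ (R x) k : ℂ) = 0 := by
    intro x k hk
    calc (inner ℂ (R x) k : ℂ) = inner ℂ x (R k) := by
          have h := ContinuousLinearMap.adjoint_inner_left R k x
          rw [hRsa.adjoint_eq] at h
          exact h
      _ = 0 := by rw [hKR k hk, inner_zero_right]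
  -- a conjugation on the kernel, transported to H
  obtain ⟨j, jadd, jsmul, jinv, jnorm⟩ := aux_exists_isConjugation K
  set jH : H → H := fun x => ↑(j (K.orthogonalProjection x)) with hjHdef
  have hjmem : ∀ x, jH x ∈ K := fun x => (j (K.orthogonalProjection x)).2
  have hproj : ∀ k (hk : k ∈ K), K.orthogonalProjection k = ⟨k, hk⟩ := by
    intro k hk
    exact Submodule.orthogonalProjection_mem_subspace_eq_self (⟨k, hk⟩ : K)
  have hjK : ∀ k (hk : k ∈ K), jH k = ↑(j ⟨k, hk⟩) := by
    intro k hk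
    show ↑(j (K.orthogonalProjection k)) = (↑(j ⟨k, hk⟩) : H)
    rw [hproj k hk]
  have hjadd : ∀ x y, jH (x + y) = jH x + jH y := by
    intro x y
    simp only [hjHdef, map_add, jadd, Submodule.coe_add]
  have hjsmul : ∀ (a : ℂ) x, jH (a • x) = (starRingEnd ℂ) a • jH x := by
    intro a x
    simp only [hjHdef, map_smul, jsmul, Submodule.coe_smul]
  have hj0 : jH 0 = 0 := by
    have := hjsmul 0 0
    simpa using this
  have hjneg : ∀ x, jH (-x) = -jH x := by
    intro x
    have := hjsmul (-1) x
    simpa using this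
  have hjsub : ∀ x y, jH (x - y) = jH x - jH y := by
    intro x y
    rw [sub_eq_add_neg, hjadd, hjneg, sub_eq_add_neg]
  have hjinv : ∀ k, k ∈ K → jH (jH k) = k := by
    intro k hk
    rw [hjK k hk, hjK _ (j ⟨k, hk⟩).2]
    have h : (⟨↑(j ⟨k, hk⟩), (j ⟨k, hk⟩).2⟩ : K) = j ⟨k, hk⟩ := rfl
    rw [h, jinv]
  have hjnorm : ∀ k, k ∈ K → ‖jH k‖ = ‖k‖ := by
    intro k hk
    rw [hjK k hk]
    have := jnorm ⟨k, hk⟩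
    simpa using this
  -- the dense subset D = range R + ker R
  set D : Set H := {d | ∃ y k, k ∈ K ∧ d = R y + k} with hDdef
  have hmemD : ∀ y k, k ∈ K → R y + k ∈ D := fun y k hk => ⟨y, k, hk, rfl⟩
  have hmemD' : ∀ d, d ∈ D → ∃ y k, k ∈ K ∧ d = R y + k := fun d hd => hd
  -- well-definedness of the candidate map on D
  have hkey : ∀ y k y' k', k ∈ K → k' ∈ K → R y + k = R y' + k' →
      A y + jH k = A y' + jH k' := by
    intro y k y' k' hk hk' h
    have h2 : R y - R y' = k' - k := by
      rw [sub_eq_sub_iff_add_eq_add, h, add_comm]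
    have hdiff : R (y - y') = k' - k := by rw [map_sub, h2]
    have hmemdiff : R (y - y') ∈ K := by
      rw [hdiff]; exact K.sub_mem hk' hk
    have hzero : R (y - y') = 0 := by
      have hin : (inner ℂ (R (y - y')) (R (y - y')) : ℂ) = 0 := hRperp (y - y') _ hmemdiff
      exact inner_self_eq_zero.mp hin
    have hkk : k' = k := by
      rw [hzero] at hdiff
      exact sub_eq_zero.mp hdiff.symm
    have hAy : A y = A y' := by
      have h3 : ‖A y - A y'‖ = 0 := by rw [← hAsub, hAnorm, hzero, norm_zero]
      exact sub_eq_zero.mp (norm_eq_zero.mp h3)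
    rw [hAy, hkk]
  -- the map on D
  have hDchoice : ∀ d : D, ∃ y k, k ∈ K ∧ (d : H) = R y + k := fun d => d.2
  set f : D → H := fun d => A (hDchoice d).choose + jH (hDchoice d).choose_spec.choose
    with hfdef
  have hf : ∀ (d : D) (y k : H), k ∈ K → (d : H) = R y + k → f d = A y + jH k := by
    intro d y k hk hdk
    obtain ⟨hk0, heq0⟩ := (hDchoice d).choose_spec.choose_spec
    exact hkey _ _ y k hk0 hk (heq0.symm.trans hdk)
  -- f is an isometry
  have hnorm_sum : ∀ u κ, κ ∈ K → ‖A u + jH κ‖ = ‖R u + κ‖ := by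
    intro u κ hκ
    have h1 : ‖A u + jH κ‖ * ‖A u + jH κ‖ = ‖A u‖ * ‖A u‖ + ‖jH κ‖ * ‖jH κ‖ :=
      norm_add_sq_eq_norm_sq_add_norm_sq_of_inner_eq_zero _ _ (hAperp u _ (hjmem κ))
    have h2 : ‖R u + κ‖ * ‖R u + κ‖ = ‖R u‖ * ‖R u‖ + ‖κ‖ * ‖κ‖ :=
      norm_add_sq_eq_norm_sq_add_norm_sq_of_inner_eq_zero _ _ (hRperp u κ hκ)
    have h3 : ‖A u + jH κ‖ * ‖A u + jH κ‖ = ‖R u + κ‖ * ‖R u + κ‖ := by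
      rw [h1, h2, hAnorm, hjnorm κ hκ]
    nlinarith [norm_nonneg (A u + jH κ), norm_nonneg (R u + κ)]
  have hfiso : Isometry f := by
    apply Isometry.of_dist_eq
    intro d d'
    obtain ⟨y, k, hk, hdk⟩ := hDchoice d
    obtain ⟨y', k', hk', hdk'⟩ := hDchoice d'
    rw [hf d y k hk hdk, hf d' y' k' hk' hdk']
    rw [Subtype.dist_eq, dist_eq_norm, dist_eq_norm, hdk, hdk']
    have e1 : A y + jH k - (A y' + jH k') = A (y - y') + jH (k - k') := by
      rw [hAsub, hjsub]; abel
    have e2 : R y + k - (R y' + k') = R (y - y') + (k - k') := by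
      rw [map_sub]; abel
    rw [e1, e2, hnorm_sum _ _ (K.sub_mem hk hk')]
  -- D is dense
  have hDdense : Dense D := by
    intro x
    set k0 : H := ↑(K.orthogonalProjection x) with hk0def
    have hv : x - k0 ∈ Kᗮ := Submodule.sub_starProjection_mem_orthogonal x
    have hker : (LinearMap.range (R : H →ₗ[ℂ] H))ᗮ = K := by
      ext v
      rw [hKdef]
      simp only [Submodule.mem_orthogonal, LinearMap.mem_ker]
      constructor
      · intro h
        have h2 : ∀ y : H, (inner ℂ y (R v) : ℂ) = 0 := fun y => by
          rw [← ContinuousLinearMap.adjoint_inner_left, hRsa.adjoint_eq]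
          exact h _ ⟨y, rfl⟩
        simpa using h2 (R v)
      · intro h u hu
        obtain ⟨y, rfl⟩ := hu
        show (inner ℂ ((R : H →ₗ[ℂ] H) y) v : ℂ) = 0
        rw [ContinuousLinearMap.coe_coe, ← hRsa.adjoint_eq,
          ContinuousLinearMap.adjoint_inner_left]
        simp [show R v = 0 from h]
    have hcl : (Kᗮ : Set H) = closure (LinearMap.range (R : H →ₗ[ℂ] H) : Set H) := by
      rw [← hker, Submodule.orthogonal_orthogonal_eq_closure]
      rfl
    have hvmem : x - k0 ∈ closure (LinearMap.range (R : H →ₗ[ℂ] H) : Set H) := by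
      rw [← hcl]; exact hv
    obtain ⟨u, hu, hlim⟩ := mem_closure_iff_seq_limit.mp hvmem
    apply mem_closure_iff_seq_limit.mpr
    refine ⟨fun n => u n + k0, fun n => ?_, ?_⟩
    · obtain ⟨y, hy⟩ := hu n
      refine ⟨y, k0, (K.orthogonalProjection x).2, ?_⟩
      show u n + k0 = R y + k0
      rw [← hy]
      rfl
    · have h := hlim.add_const k0
      simpa using h
  -- extend f to H
  have hui : IsUniformInducing (Subtype.val : D → H) :=
    isUniformEmbedding_subtype_val.isUniformInducing
  have hdr : DenseRange (Subtype.val : D → H) := hDdense.denseRange_val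
  have di : IsDenseInducing (Subtype.val : D → H) := hui.isDenseInducing hdr
  set J : H → H := di.extend f with hJdef
  have hJcont : Continuous J :=
    (uniformContinuous_uniformly_extend hui hdr hfiso.uniformContinuous).continuous
  have hJd : ∀ d : D, J ↑d = f d := fun d => di.extend_eq hfiso.continuous d
  have hJD : ∀ y k, k ∈ K → J (R y + k) = A y + jH k := by
    intro y k hk
    have hmem : R y + k ∈ D := hmemD y k hk
    have h : J (R y + k) = f ⟨R y + k, hmem⟩ := hJd ⟨R y + k, hmem⟩
    rw [h, hf ⟨R y + k, hmem⟩ y k hk rfl]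
  have hJR : ∀ x, J (R x) = A x := by
    intro x
    have := hJD x 0 K.zero_mem
    simpa [hj0] using this
  have hJk : ∀ k, k ∈ K → J k = jH k := by
    intro k hk
    have := hJD 0 k hk
    simpa [hA0] using this
  -- extension principle
  have hext : ∀ (F G : H → H), Continuous F → Continuous G →
      (∀ d, d ∈ D → F d = G d) → ∀ x, F x = G x := by
    intro F G hF hG h x
    have : F = G := hF.ext_on hDdense hG (fun d hd => h d hd)
    rw [this]
  -- J is additive
  have hJadd1 : ∀ d, d ∈ D → ∀ x, J (d + x) = J d + J x := by
    intro d hd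
    obtain ⟨y, k, hk, rfl⟩ := hmemD' d hd
    refine hext _ _ ?_ ?_ ?_
    · exact hJcont.comp (continuous_const.add continuous_id)
    · exact continuous_const.add hJcont
    · intro d' hd'
      obtain ⟨y', k', hk', rfl⟩ := hmemD' d' hd'
      have h : R y + k + (R y' + k') = R (y + y') + (k + k') := by
        rw [map_add]; abel
      rw [h, hJD _ _ (K.add_mem hk hk'), hJD y k hk, hJD y' k' hk', hAadd, hjadd]
      abel
  have hJadd : ∀ x y, J (x + y) = J x + J y := by
    intro x y
    refine hext (fun x => J (x + y)) (fun x => J x + J y) ?_ ?_ ?_ x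
    · exact hJcont.comp (continuous_id.add continuous_const)
    · exact hJcont.add continuous_const
    · intro d hd
      exact hJadd1 d hd y
  have hJsmul : ∀ (a : ℂ) x, J (a • x) = (starRingEnd ℂ) a • J x := by
    intro a x
    refine hext (fun x => J (a • x)) (fun x => (starRingEnd ℂ) a • J x) ?_ ?_ ?_ x
    · exact hJcont.comp (continuous_id.const_smul a)
    · exact hJcont.const_smul _
    · intro d hd
      obtain ⟨y, k, hk, rfl⟩ := hmemD' d hd
      have h : a • (R y + k) = R (a • y) + a • k := by rw [smul_add, map_smul]
      show J (a • (R y + k)) = (starRingEnd ℂ) a • J (R y + k)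
      rw [h, hJD _ _ (K.smul_mem a hk), hJD y k hk, hAsmul, hjsmul, smul_add]
  have hJnorm : ∀ x, ‖J x‖ = ‖x‖ := by
    intro x
    have h : (fun x : H => ‖J x‖) = fun x : H => ‖x‖ := by
      refine Continuous.ext_on hDdense hJcont.norm continuous_norm ?_
      intro d hd
      obtain ⟨y, k, hk, rfl⟩ := hmemD' d hd
      show ‖J (R y + k)‖ = ‖R y + k‖
      rw [hJD y k hk, hnorm_sum y k hk]
    exact congrFun h x
  have hJAy : ∀ y, J (A y) = R y := by
    intro y
    refine hext (fun y => J (A y)) (fun y => R y) (hJcont.comp hAcont) R.continuous ?_ y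
    intro d hd
    obtain ⟨y', k', hk', rfl⟩ := hmemD' d hd
    have h1 : A (R y' + k') = R (A y') := by rw [hAadd, hAk k' hk', add_zero, hAR]
    have h2 : R (R y' + k') = R (R y') := by rw [map_add, hKR k' hk', add_zero]
    show J (A (R y' + k')) = R (R y' + k')
    rw [h1, hJR, hAA, h2]
  have hJinv : ∀ x, J (J x) = x := by
    intro x
    refine hext (fun x => J (J x)) (fun x => x) (hJcont.comp hJcont) continuous_id ?_ x
    intro d hd
    obtain ⟨y, k, hk, rfl⟩ := hmemD' d hd
    show J (J (R y + k)) = R y + k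
    rw [hJD y k hk, hJadd (A y) (jH k), hJAy, hJk _ (hjmem k), hjinv k hk]
  have hJcomm : ∀ x, J (R x) = R (J x) := by
    intro x
    rw [hJR]
    refine hext (fun x => A x) (fun x => R (J x)) hAcont (R.continuous.comp hJcont) ?_ x
    intro d hd
    obtain ⟨y, k, hk, rfl⟩ := hmemD' d hd
    show A (R y + k) = R (J (R y + k))
    rw [hJD y k hk, map_add, hAadd, hAk k hk, add_zero, hKR _ (hjmem k), add_zero, hAR]
  refine ⟨J, ⟨hJadd, hJsmul, hJinv, hJnorm⟩, hJcomm, ?_⟩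
  intro x
  rw [hJR]
  show T x = C (C (T x))
  exact (Cinv (T x)).symm
end
end

section
/- Let A be a bounded linear operator on a complex Hilbert space H and let C be a conjugation on H. On the Hilbert-space direct sum H ⊕ H, define T(x,y) = (A x, C A* C y) and D(x,y) = (C y, C x). Then D is a conjugation on H ⊕ H and T is D-symmetric, T = D T* D; in particular, A ⊕ C A* C is a complex symmetric operator. -/
open scoped ComplexInnerProductSpace

noncomputable section

lemma conj_inner_conj {H : Type*} [NormedAddCommGroup H] [InnerProductSpace ℂ H]
    {C : H → H} (hC : IsConjugation C) (x y : H) : ⟪C x, C y⟫ = ⟪y, x⟫ := by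
  obtain ⟨hadd, hsmul, hinv, hnorm⟩ := hC
  have hsub : ∀ a b : H, C (a - b) = C a - C b := by
    intro a b
    rw [eq_sub_iff_add_eq, ← hadd, sub_add_cancel]
  have h1 : ‖C x + C y‖ = ‖y + x‖ := by rw [← hadd, hnorm, add_comm]
  have h2 : ‖C x - C y‖ = ‖y - x‖ := by
    rw [← hsub, hnorm, ← norm_neg]; congr 1; abel
  have h3 : ‖C x - Complex.I • C y‖ = ‖y - Complex.I • x‖ := by
    have e : C (y - Complex.I • x) = C y + Complex.I • C x := by
      rw [hsub, hsmul]; simp [Complex.conj_I, sub_eq_add_neg]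
    have e2 : Complex.I • (C x - Complex.I • C y) = C y + Complex.I • C x := by
      rw [smul_sub, smul_smul, Complex.I_mul_I]; module
    rw [← hnorm (y - Complex.I • x), e, ← e2, norm_smul, Complex.norm_I, one_mul]
  have h4 : ‖C x + Complex.I • C y‖ = ‖y + Complex.I • x‖ := by
    have e : C (y + Complex.I • x) = C y - Complex.I • C x := by
      rw [hadd, hsmul]; simp [Complex.conj_I, sub_eq_add_neg]
    have e2 : Complex.I • (C x + Complex.I • C y) = -(C y - Complex.I • C x) := by
      rw [smul_add, smul_smul, Complex.I_mul_I]; module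
    rw [← hnorm (y + Complex.I • x), e,
      show ‖C y - Complex.I • C x‖ = ‖-(C y - Complex.I • C x)‖ from (norm_neg _).symm,
      ← e2, norm_smul, Complex.norm_I, one_mul]
  rw [inner_eq_sum_norm_sq_div_four (𝕜 := ℂ), inner_eq_sum_norm_sq_div_four (𝕜 := ℂ)]
  have hI : (RCLike.I : ℂ) = Complex.I := rfl
  simp only [hI]
  rw [h1, h2, h3, h4]

lemma conj_inner_left {H : Type*} [NormedAddCommGroup H] [InnerProductSpace ℂ H]
    {C : H → H} (hC : IsConjugation C) (x y : H) : ⟪C x, y⟫ = ⟪C y, x⟫ := by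
  conv_lhs => rw [show y = C (C y) from (hC.2.2.1 y).symm]
  exact conj_inner_conj hC x (C y)

lemma conj_inner_right {H : Type*} [NormedAddCommGroup H] [InnerProductSpace ℂ H]
    {C : H → H} (hC : IsConjugation C) (x y : H) : ⟪x, C y⟫ = ⟪y, C x⟫ :=
  calc ⟪x, C y⟫ = (starRingEnd ℂ) ⟪C y, x⟫ := (inner_conj_symm _ _).symm
    _ = (starRingEnd ℂ) ⟪C x, y⟫ := by rw [conj_inner_left hC]
    _ = ⟪y, C x⟫ := inner_conj_symm _ _

theorem stmt13 {H : Type*} [NormedAddCommGroup H] [InnerProductSpace ℂ H] [CompleteSpace H]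
    (A : H →L[ℂ] H) (C : H → H) (hC : IsConjugation C)
    (T : WithLp 2 (H × H) →L[ℂ] WithLp 2 (H × H))
    (hT : ∀ x y : H, T ((WithLp.equiv 2 (H × H)).symm (x, y)) =
      (WithLp.equiv 2 (H × H)).symm (A x, C (ContinuousLinearMap.adjoint A (C y))))
    (D : WithLp 2 (H × H) → WithLp 2 (H × H))
    (hD : ∀ x y : H, D ((WithLp.equiv 2 (H × H)).symm (x, y)) =
      (WithLp.equiv 2 (H × H)).symm (C y, C x)) :
    IsConjugation D ∧ ∀ z, T z = D (ContinuousLinearMap.adjoint T (D z)) := by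
  obtain ⟨hadd, hsmul, hinv, hnorm⟩ := hC
  have hC' : IsConjugation C := ⟨hadd, hsmul, hinv, hnorm⟩
  have hz : ∀ z : WithLp 2 (H × H),
      z = (WithLp.equiv 2 (H × H)).symm ((WithLp.equiv 2 (H × H) z).1,
        (WithLp.equiv 2 (H × H) z).2) := fun z => rfl
  have hDfun : ∀ z : WithLp 2 (H × H),
      D z = (WithLp.equiv 2 (H × H)).symm
        (C (WithLp.equiv 2 (H × H) z).2, C (WithLp.equiv 2 (H × H) z).1) := by
    intro z; conv_lhs => rw [hz z]
    exact hD _ _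
  have e1 : ∀ (a b : H), ((WithLp.equiv 2 (H × H)).symm (a, b)).fst = a := fun _ _ => rfl
  have e2 : ∀ (a b : H), ((WithLp.equiv 2 (H × H)).symm (a, b)).snd = b := fun _ _ => rfl
  have hDconj : IsConjugation D := by
    refine ⟨?_, ?_, ?_, ?_⟩
    · intro x y
      rw [hDfun, hDfun, hDfun]
      have h : WithLp.equiv 2 (H × H) (x + y) =
          WithLp.equiv 2 (H × H) x + WithLp.equiv 2 (H × H) y := rfl
      rw [h]
      simp only [Prod.fst_add, Prod.snd_add, hadd]
      rfl
    · intro a x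
      rw [hDfun, hDfun]
      have h : WithLp.equiv 2 (H × H) (a • x) = a • WithLp.equiv 2 (H × H) x := rfl
      rw [h]
      simp only [Prod.smul_fst, Prod.smul_snd, hsmul]
      rfl
    · intro x
      rw [hDfun, hDfun]
      simp only [Equiv.apply_symm_apply, hinv]
      exact (hz x).symm
    · intro x
      have hsq : ‖D x‖ ^ 2 = ‖x‖ ^ 2 := by
        rw [WithLp.prod_norm_sq_eq_of_L2, WithLp.prod_norm_sq_eq_of_L2, hDfun, e1, e2,
          hnorm, hnorm]
        have hx1 : (x : WithLp 2 (H × H)).fst = (WithLp.equiv 2 (H × H) x).1 := rfl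
        have hx2 : (x : WithLp 2 (H × H)).snd = (WithLp.equiv 2 (H × H) x).2 := rfl
        rw [hx1, hx2]; ring
      nlinarith [norm_nonneg (D x), norm_nonneg x]
  refine ⟨hDconj, ?_⟩
  intro z
  apply ext_inner_left ℂ
  intro w
  symm
  have hDinner : ∀ u v : WithLp 2 (H × H), ⟪u, D v⟫ = ⟪v, D u⟫ := by
    intro u v
    rw [WithLp.prod_inner_apply, WithLp.prod_inner_apply]
    simp only [WithLp.ofLp_fst, WithLp.ofLp_snd]
    rw [hDfun, hDfun, e1, e2, e1, e2]
    have k1 : ⟪(u : WithLp 2 (H × H)).fst, C (WithLp.equiv 2 (H × H) v).2⟫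
        = ⟪(v : WithLp 2 (H × H)).snd, C (WithLp.equiv 2 (H × H) u).1⟫ :=
      conj_inner_right hC' _ _
    have k2 : ⟪(u : WithLp 2 (H × H)).snd, C (WithLp.equiv 2 (H × H) v).1⟫
        = ⟪(v : WithLp 2 (H × H)).fst, C (WithLp.equiv 2 (H × H) u).2⟫ :=
      conj_inner_right hC' _ _
    rw [k1, k2]; ring
  calc ⟪w, D (ContinuousLinearMap.adjoint T (D z))⟫
      = ⟪ContinuousLinearMap.adjoint T (D z), D w⟫ := by
        rw [hDinner w (ContinuousLinearMap.adjoint T (D z))]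
    _ = ⟪D z, T (D w)⟫ := ContinuousLinearMap.adjoint_inner_left T (D w) (D z)
    _ = ⟪w, T z⟫ := by
        rw [hDfun w, hDfun z, hT]
        conv_rhs => rw [hz z]
        rw [hT, WithLp.prod_inner_apply, WithLp.prod_inner_apply]
        simp only [WithLp.ofLp_fst, WithLp.ofLp_snd]
        rw [e1, e2, e1, e2]
        simp only [hinv]
        have t1 : ⟪C (WithLp.equiv 2 (H × H) z).2, A (C (WithLp.equiv 2 (H × H) w).2)⟫
            = ⟪(WithLp.equiv 2 (H × H) w).2,
                C (ContinuousLinearMap.adjoint A (C (WithLp.equiv 2 (H × H) z).2))⟫ := by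
          rw [← ContinuousLinearMap.adjoint_inner_left]
          conv_lhs => rw [show ContinuousLinearMap.adjoint A (C (WithLp.equiv 2 (H × H) z).2)
            = C (C (ContinuousLinearMap.adjoint A (C (WithLp.equiv 2 (H × H) z).2))) from
              (hinv _).symm]
          exact conj_inner_conj hC' _ _
        have t2 : ⟪C (WithLp.equiv 2 (H × H) z).1,
              C (ContinuousLinearMap.adjoint A (WithLp.equiv 2 (H × H) w).1)⟫
            = ⟪(WithLp.equiv 2 (H × H) w).1, A (WithLp.equiv 2 (H × H) z).1⟫ := by
          rw [conj_inner_conj hC', ContinuousLinearMap.adjoint_inner_left]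
        rw [t1, t2]
        have hw1 : (w : WithLp 2 (H × H)).fst = (WithLp.equiv 2 (H × H) w).1 := rfl
        have hw2 : (w : WithLp 2 (H × H)).snd = (WithLp.equiv 2 (H × H) w).2 := rfl
        rw [hw1, hw2, add_comm, e1, e2]
end
end

section
/- Let C be a conjugation on a complex Hilbert space H, let T be a bounded C-symmetric operator on H, and let λ, μ be distinct complex numbers. If x ∈ H satisfies (T − λI)^j x = 0 for some positive integer j, and y ∈ H satisfies (T − μI)^k y = 0 for some positive integer k, then ⟨x, Cy⟩ = 0. That is, generalized eigenspaces of a C-symmetric operator corresponding to distinct eigenvalues are mutually C-orthogonal. -/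
open scoped ComplexInnerProductSpace

noncomputable section

theorem stmt15 {H : Type*} [NormedAddCommGroup H] [InnerProductSpace ℂ H] [CompleteSpace H]
    (C : H → H) (hC : IsConjugation C)
    (T : H →L[ℂ] H) (hT : ∀ x, T x = C (ContinuousLinearMap.adjoint T (C x)))
    (lam mu : ℂ) (hne : lam ≠ mu)
    (x y : H) (j k : ℕ) (hj : 0 < j) (hk : 0 < k)
    (hx : ((T - lam • (1 : H →L[ℂ] H)) ^ j) x = 0)
    (hy : ((T - mu • (1 : H →L[ℂ] H)) ^ k) y = 0) :
    (⟪C y, x⟫ : ℂ) = 0 := by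
  obtain ⟨hadd, hsmul, hinv, _⟩ := hC
  have hC0 : C 0 = 0 := by
    have h := hsmul 0 0
    simpa using h
  have hneg : ∀ u : H, C (-u) = - C u := by
    intro u
    have := hsmul (-1) u
    simpa using this
  have hsub : ∀ u v : H, C (u - v) = C u - C v := by
    intro u v
    rw [sub_eq_add_neg, hadd, hneg, sub_eq_add_neg]
  have hCT : ∀ z : H, C (T z) = ContinuousLinearMap.adjoint T (C z) := by
    intro z
    rw [hT z, hinv]
  -- key symmetry of the bilinear form for T - a • 1
  have hstep : ∀ (a : ℂ) (u v : H),
      (⟪C v, (T - a • (1 : H →L[ℂ] H)) u⟫ : ℂ) = ⟪C ((T - a • (1 : H →L[ℂ] H)) v), u⟫ := by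
    intro a u v
    have hTs : (⟪C v, T u⟫ : ℂ) = ⟪C (T v), u⟫ := by
      rw [hCT v, ContinuousLinearMap.adjoint_inner_left]
    simp only [ContinuousLinearMap.sub_apply, ContinuousLinearMap.smul_apply,
      ContinuousLinearMap.one_apply, inner_sub_right, inner_smul_right, hsub, hsmul,
      inner_sub_left, inner_smul_left, starRingEnd_apply, star_star]
    rw [hTs]
  have main : ∀ n : ℕ, ∀ j k : ℕ, j + k = n → ∀ x y : H,
      ((T - lam • (1 : H →L[ℂ] H)) ^ j) x = 0 →
      ((T - mu • (1 : H →L[ℂ] H)) ^ k) y = 0 → (⟪C y, x⟫ : ℂ) = 0 := by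
    intro n
    induction n with
    | zero =>
      intro j k hjk x y hx hy
      have hj0 : j = 0 := by omega
      subst hj0
      simp only [pow_zero, ContinuousLinearMap.one_apply] at hx
      rw [hx, inner_zero_right]
    | succ n ih =>
      intro j k hjk x y hx hy
      rcases j with _ | j'
      · simp only [pow_zero, ContinuousLinearMap.one_apply] at hx
        rw [hx, inner_zero_right]
      rcases k with _ | k'
      · simp only [pow_zero, ContinuousLinearMap.one_apply] at hy
        rw [hy, hC0, inner_zero_left]
      set A := T - lam • (1 : H →L[ℂ] H) with hA
      set Bm := T - mu • (1 : H →L[ℂ] H) with hB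
      have hx' : (A ^ j') (A x) = 0 := by
        rw [← ContinuousLinearMap.mul_apply, ← pow_succ]; exact hx
      have hy' : (Bm ^ k') (Bm y) = 0 := by
        rw [← ContinuousLinearMap.mul_apply, ← pow_succ]; exact hy
      have h1 : (⟪C y, A x⟫ : ℂ) = 0 := ih j' (k' + 1) (by omega) (A x) y hx' hy
      have h2 : (⟪C (Bm y), x⟫ : ℂ) = 0 := ih (j' + 1) k' (by omega) x (Bm y) hx hy'
      have h3 : (⟪C y, Bm x⟫ : ℂ) = 0 := by rw [hstep mu x y]; exact h2
      have hdiff : Bm x - A x = (lam - mu) • x := by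
        simp only [hA, hB, ContinuousLinearMap.sub_apply, ContinuousLinearMap.smul_apply,
          ContinuousLinearMap.one_apply, sub_smul]
        abel
      have h4 : (lam - mu) * ⟪C y, x⟫ = 0 := by
        rw [← inner_smul_right, ← hdiff, inner_sub_right, h3, h1, sub_zero]
      have h5 : lam - mu ≠ 0 := sub_ne_zero.mpr hne
      exact (mul_eq_zero.mp h4).resolve_left h5
  exact main (j + k) j k rfl x y hx hy
end
end

section
/- Let C be a conjugation on a complex Hilbert space H and let E be a complex linear subspace of H with dim E ≥ 2. Then E contains a nonzero isotropic vector: there exists x ∈ E with x ≠ 0 and ⟨x, Cx⟩ = 0. -/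
open scoped ComplexInnerProductSpace

noncomputable section

theorem stmt16 {H : Type*} [NormedAddCommGroup H] [InnerProductSpace ℂ H]
    (C : H → H) (hC : IsConjugation C)
    (E : Submodule ℂ H) (hE : 2 ≤ Module.rank ℂ E) :
    ∃ x ∈ E, x ≠ 0 ∧ (⟪C x, x⟫ : ℂ) = 0 := by
  obtain ⟨hadd, hsmul, hinv, hnorm⟩ := hC
  -- extract two linearly independent vectors of E
  have h2 : ((2 : ℕ) : Cardinal) ≤ Module.rank ℂ E := by exact_mod_cast hE
  obtain ⟨s, hcard, hli⟩ := le_rank_iff_exists_linearIndependent_finset.mp h2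
  classical
  obtain ⟨u, v, huv, hsuv⟩ := Finset.card_eq_two.mp hcard
  have hset : (s : Set E) = insert u {v} := by rw [hsuv]; simp
  rw [hset] at hli
  replace hli : LinearIndepOn ℂ id ({u, v} : Set E) := hli
  rw [linearIndepOn_id_insert (by simpa using huv)] at hli
  obtain ⟨hliv, huspan⟩ := hli
  have hvne : v ≠ 0 := by
    intro h
    rw [h] at hliv
    exact (linearIndependent_unique_iff (v := fun x : ({0} : Set E) => id (x : E))).mp hliv rfl
  -- pass to H
  set u' : H := (u : H) with hu'
  set v' : H := (v : H) with hv'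
  have hv'ne : v' ≠ 0 := fun h => hvne (Subtype.coe_injective h)
  have hcomb : ∀ t : ℂ, u' + t • v' ≠ 0 := by
    intro t h
    apply huspan
    have : (u + t • v : E) = 0 := Subtype.coe_injective (by simpa using h)
    have : u = (-t) • v := by
      have := eq_neg_of_add_eq_zero_left this
      rw [this]; simp
    rw [this]
    exact Submodule.smul_mem _ _ (Submodule.mem_span_singleton_self v)
  set a : ℂ := ⟪C v', v'⟫ with ha
  by_cases haz : a = 0
  · exact ⟨v', v.2, hv'ne, haz⟩
  set b : ℂ := ⟪C u', v'⟫ + ⟪C v', u'⟫ with hb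
  set c : ℂ := ⟪C u', u'⟫ with hc
  obtain ⟨z, hz⟩ := IsAlgClosed.exists_pow_nat_eq (k := ℂ) (discrim a b c) (n := 2) (by norm_num)
  obtain ⟨t, ht⟩ := exists_quadratic_eq_zero haz ⟨z, by rw [← hz]; ring⟩
  refine ⟨u' + t • v', E.add_mem u.2 (E.smul_mem t v.2), hcomb t, ?_⟩
  have hCx : C (u' + t • v') = C u' + (starRingEnd ℂ) t • C v' := by
    rw [hadd, hsmul]
  rw [hCx]
  simp only [inner_add_left, inner_add_right, inner_smul_left, inner_smul_right,
    Complex.conj_conj]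
  rw [← ht, ← ha, ← hc]
  ring
end
end

section
/- Let C be a conjugation on a complex Hilbert space H and let (u_n)_{n∈ℕ} be a complete C-orthonormal system in H, i.e., ⟨u_n, C u_m⟩ = δ_{nm} for all n, m and the closed linear span of (u_n) is H. Suppose A is a bounded linear operator on H with A u_n = C u_n for all n. Then A is a positive operator (selfadjoint with ⟨Ax, x⟩ ≥ 0 for all x), A is invertible with A⁻¹ = C∘A∘C, and A is C-orthogonal (C A* C A = I). Moreover, the positive square root B = √A is also C-orthogonal, with B⁻¹ = C∘B∘C. -/
open scoped ComplexInnerProductSpace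

noncomputable section

section Aux

variable {H : Type*} [NormedAddCommGroup H] [InnerProductSpace ℂ H]

lemma IsConjugation.conj_inner {C : H → H} (hC : IsConjugation C) (x y : H) :
    (⟪C x, C y⟫ : ℂ) = ⟪y, x⟫ := by
  obtain ⟨ha, hs, hi, hn⟩ := hC
  have hre : ∀ a b : H, RCLike.re (⟪C a, C b⟫ : ℂ) = RCLike.re (⟪a, b⟫ : ℂ) := by
    intro a b
    have h1 : ‖C a + C b‖ = ‖a + b‖ := by rw [← ha]; exact hn _
    have h2 := @norm_add_sq ℂ _ _ _ _ (C a) (C b)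
    have h3 := @norm_add_sq ℂ _ _ _ _ a b
    rw [h1, hn, hn] at h2
    rw [h3] at h2
    linarith
  have him : (⟪C x, C y⟫ : ℂ).im = -(⟪x, y⟫ : ℂ).im := by
    have h2 := hre x (Complex.I • y)
    have hCy : C (Complex.I • y) = (-Complex.I) • C y := by
      rw [hs, Complex.conj_I]
    rw [hCy, inner_smul_right, inner_smul_right] at h2
    simpa [Complex.mul_re] using h2
  have h := hre x y
  simp only [RCLike.re_to_complex] at h
  rw [← inner_conj_symm y x]
  apply Complex.ext
  · rw [Complex.conj_re]; exact h
  · rw [Complex.conj_im]; exact him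

/-- `C ∘ T ∘ C` as a continuous linear map. -/
def IsConjugation.conjCLM {C : H → H} (hC : IsConjugation C) (T : H →L[ℂ] H) : H →L[ℂ] H :=
  LinearMap.mkContinuous
    { toFun := fun x => C (T (C x))
      map_add' := by
        intro x y
        show C (T (C (x + y))) = C (T (C x)) + C (T (C y))
        rw [hC.1, map_add, hC.1]
      map_smul' := by
        intro a x
        show C (T (C (a • x))) = a • C (T (C x))
        rw [hC.2.1, map_smul, hC.2.1]
        simp }
    ‖T‖ (by
      intro x
      simp only [LinearMap.coe_mk, AddHom.coe_mk]
      rw [hC.2.2.2]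
      calc ‖T (C x)‖ ≤ ‖T‖ * ‖C x‖ := T.le_opNorm _
        _ = ‖T‖ * ‖x‖ := by rw [hC.2.2.2])

@[simp] lemma IsConjugation.conjCLM_apply {C : H → H} (hC : IsConjugation C) (T : H →L[ℂ] H)
    (x : H) : hC.conjCLM T x = C (T (C x)) := rfl

lemma ext_on_u {F : Type*} [NormedAddCommGroup F] [NormedSpace ℂ F] (u : ℕ → H)
    (hcomplete : (Submodule.span ℂ (Set.range u)).topologicalClosure = ⊤)
    {f g : H →L[ℂ] F} (h : ∀ n, f (u n) = g (u n)) : f = g := by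
  have hd : Dense ((Submodule.span ℂ (Set.range u) : Submodule ℂ H) : Set H) :=
    Submodule.dense_iff_topologicalClosure_eq_top.mpr hcomplete
  exact ContinuousLinearMap.ext_on hd (by rintro x ⟨n, rfl⟩; exact h n)

end Aux

theorem stmt17 {H : Type*} [NormedAddCommGroup H] [InnerProductSpace ℂ H] [CompleteSpace H]
    (C : H → H) (hC : IsConjugation C)
    (u : ℕ → H)
    (horth : ∀ n m, (⟪C (u m), u n⟫ : ℂ) = if n = m then 1 else 0)
    (hcomplete : (Submodule.span ℂ (Set.range u)).topologicalClosure = ⊤)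
    (A : H →L[ℂ] H) (hA : ∀ n, A (u n) = C (u n)) :
    A.IsPositive ∧
    (∀ x, A (C (A (C x))) = x) ∧
    (∀ x, C (A (C (A x))) = x) ∧
    (∀ x, C (ContinuousLinearMap.adjoint A (C (A x))) = x) ∧
    ∀ B : H →L[ℂ] H, B.IsPositive → B ∘L B = A →
      (∀ x, C (ContinuousLinearMap.adjoint B (C (B x))) = x) ∧
      (∀ x, B (C (B (C x))) = x) ∧
      (∀ x, C (B (C (B x))) = x) := by
  have hCa := hC.1
  have hCi := hC.2.2.1
  have hci := hC.conj_inner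
  -- ⟪C x, y⟫ = ⟪C y, x⟫
  have hCleft : ∀ x y : H, (⟪C x, y⟫ : ℂ) = ⟪C y, x⟫ := by
    intro x y
    have h := hci x (C y)
    rwa [hCi] at h
  have horth' : ∀ n m, (⟪u n, C (u m)⟫ : ℂ) = if n = m then 1 else 0 := by
    intro n m
    rw [← inner_conj_symm, horth n m]
    simp [apply_ite (starRingEnd ℂ)]
  -- symmetry of A
  have h1 : ∀ n, (innerSL ℂ (u n)).comp A = innerSL ℂ (C (u n)) := by
    intro n
    apply ext_on_u u hcomplete
    intro m
    simp only [ContinuousLinearMap.comp_apply, innerSL_apply_apply, hA]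
    rw [horth' n m, horth m n]
    simp [eq_comm]
  have h1' : ∀ n y, (⟪u n, A y⟫ : ℂ) = ⟪C (u n), y⟫ := by
    intro n y
    exact DFunLike.congr_fun (h1 n) y
  have h2 : ∀ y, (innerSL ℂ y).comp A = innerSL ℂ (A y) := by
    intro y
    apply ext_on_u u hcomplete
    intro n
    simp only [ContinuousLinearMap.comp_apply, innerSL_apply_apply, hA]
    rw [← inner_conj_symm, ← h1' n y, inner_conj_symm]
  have hsym : ∀ x y : H, (⟪A x, y⟫ : ℂ) = ⟪x, A y⟫ := by
    intro x y
    have h := DFunLike.congr_fun (h2 y) x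
    simp only [ContinuousLinearMap.comp_apply, innerSL_apply_apply] at h
    rw [← inner_conj_symm, h, inner_conj_symm]
  have hsa : IsSelfAdjoint A :=
    ContinuousLinearMap.isSelfAdjoint_iff_isSymmetric.mpr fun x y => hsym x y
  -- positivity of A
  have hpos : A.IsPositive := by
    refine ⟨ContinuousLinearMap.isSelfAdjoint_iff_isSymmetric.mp hsa, ?_⟩
    have hspan : ∀ x ∈ Submodule.span ℂ (Set.range u), 0 ≤ RCLike.re (⟪A x, x⟫ : ℂ) := by
      intro x hx
      obtain ⟨c, rfl⟩ := Finsupp.mem_span_range_iff_exists_finsupp.mp hx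
      rw [Finsupp.sum]
      have key : (⟪A (∑ i ∈ c.support, c i • u i), ∑ i ∈ c.support, c i • u i⟫ : ℂ)
          = ∑ n ∈ c.support, (starRingEnd ℂ) (c n) * c n := by
        rw [map_sum, sum_inner]
        refine Finset.sum_congr rfl fun n hn => ?_
        rw [map_smul, hA, inner_smul_left, inner_sum]
        congr 1
        have : ∀ m ∈ c.support, (⟪C (u n), c m • u m⟫ : ℂ)
            = if m = n then c n else 0 := by
          intro m hm
          rw [inner_smul_right, horth m n]
          split_ifs with h
          · subst h; simp
          · simp
        rw [Finset.sum_congr rfl this, Finset.sum_ite_eq' c.support n (fun _ => c n),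
          if_pos hn]
      rw [key, map_sum]
      apply Finset.sum_nonneg
      intro i _
      simp [Complex.normSq_nonneg, ← Complex.normSq_eq_conj_mul_self]
    intro x
    have hx : x ∈ closure ((Submodule.span ℂ (Set.range u) : Submodule ℂ H) : Set H) :=
      (Submodule.dense_iff_topologicalClosure_eq_top.mpr hcomplete) x
    have hcont : Continuous fun y : H => RCLike.re (⟪A y, y⟫ : ℂ) :=
      RCLike.continuous_re.comp (Continuous.inner A.continuous continuous_id)
    have hclosed : IsClosed {y : H | 0 ≤ RCLike.re (⟪A y, y⟫ : ℂ)} :=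
      isClosed_le continuous_const hcont
    exact closure_minimal (fun y hy => hspan y hy) hclosed hx
  -- inverses
  set Ainv := hC.conjCLM A with hAinv_def
  have hmul1 : Ainv * A = 1 := by
    rw [ContinuousLinearMap.mul_def]
    apply ext_on_u u hcomplete
    intro n
    simp only [ContinuousLinearMap.comp_apply, hAinv_def, IsConjugation.conjCLM_apply,
      ContinuousLinearMap.one_apply, hA, hCi]
  have hA'Ax : ∀ x, C (A (C (A x))) = x := fun x => DFunLike.congr_fun hmul1 x
  have hAA'x : ∀ x, A (C (A (C x))) = x := by
    intro x
    have h := congrArg C (hA'Ax (C x))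
    rwa [hCi, hCi] at h
  have hmul2 : A * Ainv = 1 := by
    ext x
    exact hAA'x x
  refine ⟨hpos, hAA'x, hA'Ax, ?_, ?_⟩
  · intro x
    rw [hsa.adjoint_eq]
    exact hA'Ax x
  intro B hB hBB
  have hBsym : ∀ x y : H, (⟪B x, y⟫ : ℂ) = ⟪x, B y⟫ :=
    fun x y => hB.1 x y
  set B' := hC.conjCLM B with hB'_def
  have hB'pos : B'.IsPositive := by
    constructor
    · show LinearMap.IsSymmetric (B' : H →ₗ[ℂ] H)
      intro x y
      show (⟪C (B (C x)), y⟫ : ℂ) = ⟪x, C (B (C y))⟫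
      calc (⟪C (B (C x)), y⟫ : ℂ) = ⟪C y, B (C x)⟫ := hCleft _ _
        _ = ⟪B (C y), C x⟫ := (hBsym _ _).symm
        _ = (starRingEnd ℂ) ⟪C x, B (C y)⟫ := (inner_conj_symm _ _).symm
        _ = (starRingEnd ℂ) ⟪C (B (C y)), x⟫ := by rw [hCleft]
        _ = ⟪x, C (B (C y))⟫ := inner_conj_symm _ _
    · intro x
      show 0 ≤ RCLike.re (⟪C (B (C x)), x⟫ : ℂ)
      rw [hCleft]
      exact hB.re_inner_nonneg_right (C x)
  have hBA : B * B = A := by rw [ContinuousLinearMap.mul_def]; exact hBB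
  have hB'B' : B' * B' = Ainv := by
    ext x
    show C (B (C (C (B (C x))))) = C (A (C x))
    rw [hCi]
    congr 1
    exact DFunLike.congr_fun hBB (C x)
  set Binv := B * Ainv with hBinv_def
  have hBr : B * Binv = 1 := by rw [hBinv_def, ← mul_assoc, hBA, hmul2]
  have hBl : (Ainv * B) * B = 1 := by rw [mul_assoc, hBA, hmul1]
  have hBinv_eq : Ainv * B = Binv := by
    calc Ainv * B = (Ainv * B) * (B * Binv) := by rw [hBr, mul_one]
      _ = ((Ainv * B) * B) * Binv := (mul_assoc (Ainv * B) B Binv).symm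
      _ = Binv := by rw [hBl, one_mul]
  have hBl' : Binv * B = 1 := hBinv_eq ▸ hBl
  have hBinvsq : Binv * Binv = Ainv := by
    have h : Binv * Binv * A = 1 := by
      calc Binv * Binv * A = Binv * Binv * (B * B) := by rw [hBA]
        _ = Binv * ((Binv * B) * B) := by
            rw [mul_assoc Binv Binv (B * B), ← mul_assoc Binv B B]
        _ = 1 := by rw [hBl', one_mul]; exact hBl'
    have h2 : Binv * Binv = (Binv * Binv) * (A * Ainv) := by rw [hmul2, mul_one]
    rw [h2, ← mul_assoc (Binv * Binv) A Ainv, h, one_mul]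
  have hBinvpos : Binv.IsPositive := by
    constructor
    · have hstar : star Binv * B = 1 := by
        have h := congrArg star hBr
        rwa [star_mul, star_one, hB.isSelfAdjoint.star_eq] at h
      have : star Binv = Binv := by
        calc star Binv = star Binv * (B * Binv) := by rw [hBr, mul_one]
          _ = (star Binv * B) * Binv := (mul_assoc _ _ _).symm
          _ = Binv := by rw [hstar, one_mul]
      exact ContinuousLinearMap.isSelfAdjoint_iff_isSymmetric.mp this
    · intro x
      have hx : B (Binv x) = x := by
        have h := DFunLike.congr_fun hBr x
        rwa [ContinuousLinearMap.mul_apply, ContinuousLinearMap.one_apply] at h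
      show 0 ≤ RCLike.re (⟪Binv x, x⟫ : ℂ)
      nth_rewrite 2 [← hx]
      exact hB.re_inner_nonneg_right (Binv x)
  have hfin : B' = Binv := by
    have hu1 := CFC.sqrt_unique (a := Ainv) (b := B') hB'B'
      ((ContinuousLinearMap.nonneg_iff_isPositive _).mpr hB'pos)
    have hu2 := CFC.sqrt_unique (a := Ainv) (b := Binv) hBinvsq
      ((ContinuousLinearMap.nonneg_iff_isPositive _).mpr hBinvpos)
    rw [hu1] at hu2
    exact hu2
  have hleft : ∀ x, C (B (C (B x))) = x := by
    intro x
    have h : B' * B = 1 := by rw [hfin]; exact hBl'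
    have := DFunLike.congr_fun h x
    rwa [ContinuousLinearMap.mul_apply, ContinuousLinearMap.one_apply] at this
  refine ⟨?_, ?_, hleft⟩
  · intro x
    rw [hB.isSelfAdjoint.adjoint_eq]
    exact hleft x
  · intro x
    have h : B * B' = 1 := by rw [hfin]; exact hBr
    have := DFunLike.congr_fun h x
    rwa [ContinuousLinearMap.mul_apply, ContinuousLinearMap.one_apply] at this
end
end

section
/- (Weyl–Horn-type estimate) Let H be a complex Hilbert space, let B : H × H → ℂ be a bounded symmetric bilinear form, let (u_k)_{k∈ℕ} be an orthonormal basis of H, and let λ : ℕ → ℝ be a nonincreasing sequence of nonnegative reals (the characteristic values of B) such that B(u_j, u_k) = λ_j δ_{jk} for all j, k. Then for every natural number n and all vectors g_0, g_1, …, g_n ∈ H, |det((B(g_i, g_j))_{0≤i,j≤n})| ≤ λ_0 λ_1 ⋯ λ_n · det((⟨g_i, g_j⟩)_{0≤i,j≤n}), where the Gram determinant det(⟨g_i, g_j⟩) on the right-hand side is a nonnegative real number. -/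
open scoped ComplexInnerProductSpace

noncomputable section

set_option linter.unusedVariables false

open Finset

namespace WeylHornAux

noncomputable def enum (m : ℕ) (S : Finset ℕ) : Fin m → ℕ :=
  if h : S.card = m then S.orderEmbOfFin h else fun _ => 0

lemma strictMono_le {m : ℕ} {f : Fin m → ℕ} (hf : StrictMono f) (i : Fin m) : (i : ℕ) ≤ f i := by
  obtain ⟨v, hv⟩ := i
  induction v with
  | zero => exact Nat.zero_le _
  | succ v ih =>
    have hv' : v < m := Nat.lt_of_succ_lt hv
    have h1 : f ⟨v, hv'⟩ < f ⟨v + 1, hv⟩ := hf (by simp [Fin.lt_def])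
    have h2 := ih hv'
    simpa using Nat.lt_of_le_of_lt h2 h1

lemma expand_det {m N : ℕ} (α : Fin m → ℕ → ℂ) (w : ℕ → Fin m → ℂ) :
    (Matrix.of fun i j : Fin m => ∑ k ∈ range N, α i k * w k j).det
      = ∑ r ∈ Fintype.piFinset (fun _ : Fin m => range N),
          (∏ i, α i (r i)) * (Matrix.of fun i j : Fin m => w (r i) j).det := by
  have h1 : (Matrix.of fun i j : Fin m => ∑ k ∈ range N, α i k * w k j)
      = fun i => ∑ k ∈ range N, α i k • w k := by
    ext i j
    simp [Finset.sum_apply]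
  rw [Matrix.det, h1, ← AlternatingMap.coe_multilinearMap,
    MultilinearMap.map_sum_finset]
  refine Finset.sum_congr rfl fun r _ => ?_
  rw [MultilinearMap.map_smul_univ]
  rw [smul_eq_mul]
  rfl


lemma sum_group {m N : ℕ} (T : (Fin m → ℕ) → ℂ)
    (hT : ∀ r : Fin m → ℕ, ¬ Function.Injective r → T r = 0) :
    ∑ r ∈ Fintype.piFinset (fun _ : Fin m => range N), T r
      = ∑ S ∈ (range N).powersetCard m, ∑ π : Equiv.Perm (Fin m),
          T (fun i => enum m S (π i)) := by
  classical
  rw [← Finset.sum_filter_of_ne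
    (p := fun r : Fin m → ℕ => Function.Injective r)
    (fun r _ h0 => by by_contra hni; exact h0 (hT r hni))]
  rw [← Finset.sum_sigma ((range N).powersetCard m)
    (fun _ => (Finset.univ : Finset (Equiv.Perm (Fin m))))
    (fun p => T (fun i => enum m p.1 (p.2 i)))]
  refine (Finset.sum_bij (fun p _ => fun i : Fin m => enum m p.1 (p.2 i)) ?_ ?_ ?_ ?_).symm
  · rintro ⟨S, π⟩ hp
    simp only [Finset.mem_sigma, Finset.mem_powersetCard] at hp
    obtain ⟨⟨hsub, hcard⟩, -⟩ := hp
    have he : enum m S = S.orderEmbOfFin hcard := dif_pos hcard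
    simp only [Finset.mem_filter, Fintype.mem_piFinset]
    refine ⟨fun i => ?_, ?_⟩
    · rw [he]; exact hsub (S.orderEmbOfFin_mem hcard (π i))
    · rw [he]
      exact (S.orderEmbOfFin hcard).injective.comp π.injective
  · rintro ⟨S, π⟩ hp ⟨S', π'⟩ hp' heq
    simp only [Finset.mem_sigma, Finset.mem_powersetCard] at hp hp'
    obtain ⟨⟨hsub, hcard⟩, -⟩ := hp
    obtain ⟨⟨hsub', hcard'⟩, -⟩ := hp'
    have he : enum m S = S.orderEmbOfFin hcard := dif_pos hcard
    have he' : enum m S' = S'.orderEmbOfFin hcard' := dif_pos hcard'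
    have heq' : (fun i => enum m S (π i)) = (fun i => enum m S' (π' i)) := heq
    rw [he, he'] at heq'
    have himg : ∀ (S₀ : Finset ℕ) (h₀ : S₀.card = m) (π₀ : Equiv.Perm (Fin m)),
        Finset.image (fun i => S₀.orderEmbOfFin h₀ (π₀ i)) Finset.univ = S₀ := by
      intro S₀ h₀ π₀
      have hinj : Function.Injective (fun i => S₀.orderEmbOfFin h₀ (π₀ i)) :=
        fun a b hab => π₀.injective ((S₀.orderEmbOfFin h₀).injective hab)
      apply Finset.eq_of_subset_of_card_le
      · intro x hx
        simp only [Finset.mem_image] at hx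
        obtain ⟨i, -, rfl⟩ := hx
        exact S₀.orderEmbOfFin_mem h₀ (π₀ i)
      · rw [Finset.card_image_of_injective _ hinj, Finset.card_univ, Fintype.card_fin, h₀]
    have hSS : S = S' := by
      rw [← himg S hcard π, ← himg S' hcard' π']
      exact Finset.image_congr (fun i _ => congrFun heq' i)
    subst hSS
    obtain rfl : π = π' :=
      Equiv.ext fun i => (S.orderEmbOfFin hcard).injective (congrFun heq' i)
    rfl
  · intro r hr
    simp only [Finset.mem_filter, Fintype.mem_piFinset, Finset.mem_range] at hr
    obtain ⟨hrN, hrinj⟩ := hr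
    set S : Finset ℕ := Finset.image r Finset.univ with hS
    have hcard : S.card = m := by
      rw [hS, Finset.card_image_of_injective _ hrinj, Finset.card_univ, Fintype.card_fin]
    have hmem : ∀ i, r i ∈ S := fun i => Finset.mem_image_of_mem r (Finset.mem_univ i)
    have hπ0inj : Function.Injective
        (fun i => (S.orderIsoOfFin hcard).symm ⟨r i, hmem i⟩) := by
      intro i j hij
      apply hrinj
      have := congrArg (S.orderIsoOfFin hcard) hij
      simp only [OrderIso.apply_symm_apply] at this
      exact congrArg Subtype.val this
    refine ⟨⟨S, Equiv.ofBijective _ (Finite.injective_iff_bijective.mp hπ0inj)⟩, ?_, ?_⟩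
    · simp only [Finset.mem_sigma, Finset.mem_powersetCard]
      refine ⟨⟨?_, hcard⟩, Finset.mem_univ _⟩
      intro x hx
      rw [hS] at hx
      simp only [Finset.mem_image] at hx
      obtain ⟨i, -, rfl⟩ := hx
      exact Finset.mem_range.mpr (hrN i)
    · funext i
      have he : enum m S = S.orderEmbOfFin hcard := dif_pos hcard
      show enum m S ((Equiv.ofBijective _ (Finite.injective_iff_bijective.mp hπ0inj)) i) = r i
      rw [he]
      show (S.orderEmbOfFin hcard) ((S.orderIsoOfFin hcard).symm ⟨r i, hmem i⟩) = r i
      rw [← Finset.coe_orderIsoOfFin_apply, OrderIso.apply_symm_apply]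
  · intro p hp
    rfl


lemma det_W_eq {m : ℕ} (c : Fin m → ℕ → ℂ) (e : Fin m → ℕ) :
    (Matrix.of fun i j : Fin m => c j (e i)).det
      = ∑ π : Equiv.Perm (Fin m), (Equiv.Perm.sign π : ℂ) * ∏ i, c i (e (π i)) := by
  rw [Matrix.det_apply]
  refine Finset.sum_congr rfl fun π _ => ?_
  simp only [Units.smul_def, zsmul_eq_mul]
  rfl

lemma det_W_perm {m : ℕ} (c : Fin m → ℕ → ℂ) (e : Fin m → ℕ) (π : Equiv.Perm (Fin m)) :
    (Matrix.of fun i j : Fin m => c j (e (π i))).det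
      = (Equiv.Perm.sign π : ℂ) * (Matrix.of fun i j : Fin m => c j (e i)).det := by
  have h : (Matrix.of fun i j : Fin m => c j (e (π i)))
      = (Matrix.of fun i j : Fin m => c j (e i)).submatrix π id := rfl
  rw [h, Matrix.det_permute]

lemma sum_perm_M {m : ℕ} (σc : ℕ → ℂ) (c : Fin m → ℕ → ℂ) (e : Fin m → ℕ) :
    (∑ π : Equiv.Perm (Fin m),
        (∏ i, σc (e (π i)) * c i (e (π i))) *
          (Matrix.of fun i j : Fin m => c j (e (π i))).det)
      = (∏ i, σc (e i)) * ((Matrix.of fun i j : Fin m => c j (e i)).det) ^ 2 := by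
  calc (∑ π : Equiv.Perm (Fin m),
        (∏ i, σc (e (π i)) * c i (e (π i))) *
          (Matrix.of fun i j : Fin m => c j (e (π i))).det)
      = ∑ π : Equiv.Perm (Fin m), (∏ i, σc (e i)) *
          (((Equiv.Perm.sign π : ℂ) * ∏ i, c i (e (π i))) *
            (Matrix.of fun i j : Fin m => c j (e i)).det) := by
        refine Finset.sum_congr rfl fun π _ => ?_
        rw [det_W_perm, Finset.prod_mul_distrib, Equiv.prod_comp π (fun k => σc (e k))]
        ring
    _ = (∏ i, σc (e i)) *
          ((∑ π : Equiv.Perm (Fin m), (Equiv.Perm.sign π : ℂ) * ∏ i, c i (e (π i))) *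
            (Matrix.of fun i j : Fin m => c j (e i)).det) := by
        rw [← Finset.mul_sum, ← Finset.sum_mul]
    _ = (∏ i, σc (e i)) * ((Matrix.of fun i j : Fin m => c j (e i)).det) ^ 2 := by
        rw [← det_W_eq]; ring

lemma sum_perm_G {m : ℕ} (c : Fin m → ℕ → ℂ) (e : Fin m → ℕ) :
    (∑ π : Equiv.Perm (Fin m),
        (∏ i, c i (e (π i))) *
          (Matrix.of fun i j : Fin m => (starRingEnd ℂ) (c j (e (π i)))).det)
      = ((Complex.normSq ((Matrix.of fun i j : Fin m => c j (e i)).det) : ℝ) : ℂ) := by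
  have key : ∀ π : Equiv.Perm (Fin m),
      (Matrix.of fun i j : Fin m => (starRingEnd ℂ) (c j (e (π i)))).det
        = (Equiv.Perm.sign π : ℂ) *
            (starRingEnd ℂ) ((Matrix.of fun i j : Fin m => c j (e i)).det) := by
    intro π
    have h1 : (Matrix.of fun i j : Fin m => (starRingEnd ℂ) (c j (e (π i))))
        = (starRingEnd ℂ).mapMatrix (Matrix.of fun i j : Fin m => c j (e (π i))) := rfl
    rw [h1, ← RingHom.map_det, det_W_perm, map_mul]
    congr 1
    simp
  calc (∑ π : Equiv.Perm (Fin m),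
        (∏ i, c i (e (π i))) *
          (Matrix.of fun i j : Fin m => (starRingEnd ℂ) (c j (e (π i)))).det)
      = (∑ π : Equiv.Perm (Fin m), (Equiv.Perm.sign π : ℂ) * ∏ i, c i (e (π i))) *
          (starRingEnd ℂ) ((Matrix.of fun i j : Fin m => c j (e i)).det) := by
        rw [Finset.sum_mul]
        refine Finset.sum_congr rfl fun π _ => ?_
        rw [key π]; ring
    _ = _ := by rw [← det_W_eq, Complex.mul_conj]


lemma finKey (m N : ℕ) (σ : ℕ → ℝ) (hmono : Antitone σ) (hnn : ∀ k, 0 ≤ σ k)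
    (c : Fin m → ℕ → ℂ) :
    ∃ d : ℝ, 0 ≤ d ∧
      (Matrix.of fun i j : Fin m => ∑ k ∈ range N, (starRingEnd ℂ) (c j k) * c i k).det
        = (d : ℂ) ∧
      ‖(Matrix.of fun i j : Fin m => ∑ k ∈ range N, (σ k : ℂ) * c i k * c j k).det‖ ≤
        (∏ i : Fin m, σ (i : ℕ)) * d := by
  classical
  set W : Finset ℕ → ℂ := fun S => (Matrix.of fun i j : Fin m => c j (enum m S i)).det with hW
  refine ⟨∑ S ∈ (range N).powersetCard m, Complex.normSq (W S), ?_, ?_, ?_⟩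
  · exact Finset.sum_nonneg fun S _ => Complex.normSq_nonneg _
  · have h0 : (Matrix.of fun i j : Fin m => ∑ k ∈ range N, (starRingEnd ℂ) (c j k) * c i k)
        = (Matrix.of fun i j : Fin m =>
            ∑ k ∈ range N, c i k * (starRingEnd ℂ) (c j k)) := by
      ext i j
      show (∑ k ∈ range N, (starRingEnd ℂ) (c j k) * c i k)
          = ∑ k ∈ range N, c i k * (starRingEnd ℂ) (c j k)
      exact Finset.sum_congr rfl fun k _ => mul_comm _ _
    rw [h0, expand_det (fun i k => c i k) (fun k j => (starRingEnd ℂ) (c j k)),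
      sum_group (fun r => (∏ i, c i (r i)) *
        (Matrix.of fun i j : Fin m => (starRingEnd ℂ) (c j (r i))).det)
        (fun r hr => ?_)]
    · rw [Complex.ofReal_sum]
      exact Finset.sum_congr rfl fun S _ => sum_perm_G c (enum m S)
    · obtain ⟨i, i', hii, hne⟩ := Function.not_injective_iff.mp hr
      refine mul_eq_zero_of_right _ (Matrix.det_zero_of_row_eq hne ?_)
      funext j
      simp only [Matrix.of_apply, hii]
  · rw [expand_det (fun i k => (σ k : ℂ) * c i k) (fun k j => c j k),
      sum_group (fun r => (∏ i, (σ (r i) : ℂ) * c i (r i)) *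
        (Matrix.of fun i j : Fin m => c j (r i)).det) (fun r hr => ?_)]
    swap
    · obtain ⟨i, i', hii, hne⟩ := Function.not_injective_iff.mp hr
      refine mul_eq_zero_of_right _ (Matrix.det_zero_of_row_eq hne ?_)
      funext j
      simp only [Matrix.of_apply, hii]
    calc ‖∑ S ∈ (range N).powersetCard m, ∑ π : Equiv.Perm (Fin m),
            (∏ i, (σ (enum m S (π i)) : ℂ) * c i (enum m S (π i))) *
              (Matrix.of fun i j : Fin m => c j (enum m S (π i))).det‖
        ≤ ∑ S ∈ (range N).powersetCard m, ‖∑ π : Equiv.Perm (Fin m),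
            (∏ i, (σ (enum m S (π i)) : ℂ) * c i (enum m S (π i))) *
              (Matrix.of fun i j : Fin m => c j (enum m S (π i))).det‖ :=
          norm_sum_le _ _
      _ ≤ ∑ S ∈ (range N).powersetCard m,
            (∏ i : Fin m, σ (i : ℕ)) * Complex.normSq (W S) := by
          refine Finset.sum_le_sum fun S hS => ?_
          rw [sum_perm_M (fun k => (σ k : ℂ)) c (enum m S), norm_mul, norm_pow]
          have h1 : (∏ i : Fin m, ((σ (enum m S i)) : ℂ))
              = (((∏ i : Fin m, σ (enum m S i)) : ℝ) : ℂ) := by push_cast; rfl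
          rw [h1, Complex.norm_real,
            Real.norm_of_nonneg (Finset.prod_nonneg fun i _ => hnn _),
            ← Complex.sq_norm]
          refine mul_le_mul_of_nonneg_right ?_ (by positivity)
          obtain ⟨-, hcard⟩ := Finset.mem_powersetCard.mp hS
          have he : enum m S = S.orderEmbOfFin hcard := dif_pos hcard
          refine Finset.prod_le_prod (fun i _ => hnn _) fun i _ => ?_
          refine hmono ?_
          rw [he]
          exact strictMono_le (S.orderEmbOfFin hcard).strictMono i
      _ = (∏ i : Fin m, σ (i : ℕ)) * ∑ S ∈ (range N).powersetCard m,
            Complex.normSq (W S) := (Finset.mul_sum _ _ _).symm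

end WeylHornAux

theorem stmt18 {H : Type*} [NormedAddCommGroup H] [InnerProductSpace ℂ H] [CompleteSpace H]
    (B : H → H → ℂ)
    (hadd1 : ∀ y x x', B (x + x') y = B x y + B x' y)
    (hsmul1 : ∀ (a : ℂ) (x y : H), B (a • x) y = a * B x y)
    (hadd2 : ∀ x y y', B x (y + y') = B x y + B x y')
    (hsmul2 : ∀ (a : ℂ) (x y : H), B x (a • y) = a * B x y)
    (hsymm : ∀ x y, B x y = B y x)
    (hbdd : ∃ M : ℝ, ∀ x y, ‖B x y‖ ≤ M * ‖x‖ * ‖y‖)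
    (u : HilbertBasis ℕ ℂ H) (σ : ℕ → ℝ) (hmono : Antitone σ) (hnn : ∀ k, 0 ≤ σ k)
    (hdiag : ∀ j k, B (u j) (u k) = if j = k then (σ j : ℂ) else 0)
    (n : ℕ) (g : Fin (n + 1) → H) :
    ∃ d : ℝ, 0 ≤ d ∧
      (Matrix.of fun i j : Fin (n + 1) => (⟪g j, g i⟫ : ℂ)).det = (d : ℂ) ∧
      ‖(Matrix.of fun i j : Fin (n + 1) => B (g i) (g j)).det‖ ≤
        (∏ i : Fin (n + 1), σ (i : ℕ)) * d := by
  classical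
  obtain ⟨M0, hM0⟩ := hbdd
  have hL : ∀ y : H, ∃ Ly : H →L[ℂ] ℂ, ∀ x, Ly x = B x y := by
    intro y
    refine ⟨LinearMap.mkContinuousOfExistsBound
      { toFun := fun x => B x y
        map_add' := fun x x' => hadd1 y x x'
        map_smul' := fun a x => hsmul1 a x y } ⟨M0 * ‖y‖, fun x => ?_⟩, fun x => rfl⟩
    calc ‖B x y‖ ≤ M0 * ‖x‖ * ‖y‖ := hM0 x y
      _ = M0 * ‖y‖ * ‖x‖ := by ring
  have key1 : ∀ (y x : H), HasSum (fun k => u.repr x k * B (u k) y) (B x y) := by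
    intro y x
    obtain ⟨Ly, hLy⟩ := hL y
    have h := (u.hasSum_repr x).mapL Ly
    have hfun : (fun k => Ly (u.repr x k • (u k : H)))
        = fun k => u.repr x k * B ((u k : H)) y := by
      funext k
      rw [map_smul, smul_eq_mul, hLy]
    rw [hfun, hLy x] at h
    exact h
  have key2 : ∀ (x : H) (k : ℕ), B x (u k) = u.repr x k * (σ k : ℂ) := by
    intro x k
    have h1 := key1 (u k) x
    have h2 : (fun m => u.repr x m * B (u m) (u k))
        = fun m => if m = k then u.repr x k * (σ k : ℂ) else 0 := by
      funext m
      rw [hdiag m k]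
      by_cases hmk : m = k
      · subst hmk; simp
      · simp [hmk]
    rw [h2] at h1
    exact h1.unique (hasSum_ite_eq k _)
  set c : Fin (n + 1) → ℕ → ℂ := fun i k => u.repr (g i) k with hc
  have hasM : ∀ i j : Fin (n + 1),
      HasSum (fun k => (σ k : ℂ) * c i k * c j k) (B (g i) (g j)) := by
    intro i j
    have h1 := key1 (g j) (g i)
    have h2 : (fun k => u.repr (g i) k * B (u k) (g j))
        = fun k => (σ k : ℂ) * c i k * c j k := by
      funext k
      rw [hsymm (u k) (g j), key2 (g j) k]
      simp only [hc]
      ring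
    rwa [h2] at h1
  have hasG : ∀ i j : Fin (n + 1),
      HasSum (fun k => (starRingEnd ℂ) (c j k) * c i k) (⟪g j, g i⟫ : ℂ) := by
    intro i j
    have h1 := u.hasSum_inner_mul_inner (g j) (g i)
    have h2 : (fun k => (⟪g j, (u k : H)⟫ : ℂ) * (⟪(u k : H), g i⟫ : ℂ))
        = fun k => (starRingEnd ℂ) (c j k) * c i k := by
      funext k
      simp only [hc, HilbertBasis.repr_apply_apply, ← inner_conj_symm (g j) ((u k : H))]
    rwa [h2] at h1
  choose dd hdd0 hddG hddM using fun N => WeylHornAux.finKey (n + 1) N σ hmono hnn c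
  set P : ℝ := ∏ i : Fin (n + 1), σ (i : ℕ) with hP
  have hMt : Filter.Tendsto (fun N => (Matrix.of fun i j : Fin (n + 1) =>
      ∑ k ∈ Finset.range N, (σ k : ℂ) * c i k * c j k)) Filter.atTop
      (nhds (Matrix.of fun i j : Fin (n + 1) => B (g i) (g j))) := by
    refine tendsto_pi_nhds.mpr fun i => tendsto_pi_nhds.mpr fun j => ?_
    exact (hasM i j).tendsto_sum_nat
  have hGt : Filter.Tendsto (fun N => (Matrix.of fun i j : Fin (n + 1) =>
      ∑ k ∈ Finset.range N, (starRingEnd ℂ) (c j k) * c i k)) Filter.atTop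
      (nhds (Matrix.of fun i j : Fin (n + 1) => (⟪g j, g i⟫ : ℂ))) := by
    refine tendsto_pi_nhds.mpr fun i => tendsto_pi_nhds.mpr fun j => ?_
    exact (hasG i j).tendsto_sum_nat
  have hdetM : Filter.Tendsto (fun N => ‖(Matrix.of fun i j : Fin (n + 1) =>
      ∑ k ∈ Finset.range N, (σ k : ℂ) * c i k * c j k).det‖) Filter.atTop
      (nhds ‖(Matrix.of fun i j : Fin (n + 1) => B (g i) (g j)).det‖) :=
    ((continuous_norm.tendsto _).comp ((continuous_id.matrix_det.tendsto _).comp hMt))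
  have hdetG : Filter.Tendsto (fun N => (Matrix.of fun i j : Fin (n + 1) =>
      ∑ k ∈ Finset.range N, (starRingEnd ℂ) (c j k) * c i k).det) Filter.atTop
      (nhds (Matrix.of fun i j : Fin (n + 1) => (⟪g j, g i⟫ : ℂ)).det) :=
    (continuous_id.matrix_det.tendsto _).comp hGt
  have hdd : Filter.Tendsto (fun N => ((dd N : ℝ) : ℂ)) Filter.atTop
      (nhds (Matrix.of fun i j : Fin (n + 1) => (⟪g j, g i⟫ : ℂ)).det) := by
    have heq : (fun N => ((dd N : ℝ) : ℂ)) = fun N => (Matrix.of fun i j : Fin (n + 1) =>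
        ∑ k ∈ Finset.range N, (starRingEnd ℂ) (c j k) * c i k).det :=
      funext fun N => (hddG N).symm
    rw [heq]
    exact hdetG
  set d : ℝ := ((Matrix.of fun i j : Fin (n + 1) => (⟪g j, g i⟫ : ℂ)).det).re with hd
  have hre : Filter.Tendsto dd Filter.atTop (nhds d) := by
    have h1 := (Complex.continuous_re.tendsto _).comp hdd
    simpa [Function.comp_def] using h1
  have him : ((Matrix.of fun i j : Fin (n + 1) => (⟪g j, g i⟫ : ℂ)).det).im = 0 := by
    have h1 := (Complex.continuous_im.tendsto _).comp hdd
    simp only [Function.comp_def, Complex.ofReal_im] at h1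
    exact tendsto_nhds_unique h1 tendsto_const_nhds
  refine ⟨d, ?_, ?_, ?_⟩
  · exact ge_of_tendsto' hre fun N => hdd0 N
  · exact Complex.ext (by simp [hd]) (by simp [him])
  · exact le_of_tendsto_of_tendsto' hdetM (hre.const_mul P) fun N => hddM N
end
end
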